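/- arXiv:2411.17670 — 5 statements merged into one kernel-verified Lean document; each statement's English description precedes it below -/
import Mathlib

section
/- Let a, c > 0 and b, d be real numbers, and set α := max(-b/a, -d/c). The function f(x) := log(Γ(ax + b)/Γ(cx + d)) is completely monotone on (α, ∞) if and only if a = c and b = d. -/
open Set Real

def CompletelyMonotoneOn (f : ℝ → ℝ) (I : Set ℝ) : Prop :=
  ContDiffOn ℝ (⊤ : ℕ∞) f I ∧
    ∀ (n : ℕ), ∀ x ∈ I, 0 ≤ (-1 : ℝ) ^ n * iteratedDerivWithin n f I x

lemma aux_iter_zero {s : Set ℝ} (hs : UniqueDiffOn ℝ s) (n : ℕ) :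
    ∀ x ∈ s, iteratedDerivWithin n (fun _ => (0:ℝ)) s x = 0 := by
  induction n with
  | zero => intro x hx; simp
  | succ n ih =>
    intro x hx
    have h1 : iteratedDerivWithin (n + 1) (fun _ => (0:ℝ)) s x
        = derivWithin (iteratedDerivWithin n (fun _ => (0:ℝ)) s) s x :=
      by rw [iteratedDerivWithin_succ]
    have h2 : derivWithin (iteratedDerivWithin n (fun _ => (0:ℝ)) s) s x
        = derivWithin (fun _ : ℝ => (0:ℝ)) s x :=
      derivWithin_congr (fun y hy => ih y hy) (ih x hx)
    have h3 : derivWithin (fun _ : ℝ => (0:ℝ)) s x = 0 := congrFun (derivWithin_const s (0:ℝ)) x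
    rw [h1, h2, h3]

lemma gamma_log_slope {s t : ℝ} (hs : 2 ≤ s) (hst : s < t) :
    (t - s) * Real.log (s - 1) ≤ Real.log (Real.Gamma t) - Real.log (Real.Gamma s) := by
  have h1 : (0:ℝ) < s - 1 := by linarith
  have h2 : (0:ℝ) < s := by linarith
  have h3 : (0:ℝ) < t := by linarith
  have key := Real.convexOn_log_Gamma.slope_mono_adjacent (x := s - 1) (y := s) (z := t)
    (Set.mem_Ioi.mpr h1) (Set.mem_Ioi.mpr h3) (by linarith) hst
  simp only [Function.comp_apply] at key
  have hG : Real.Gamma s = (s - 1) * Real.Gamma (s - 1) := by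
    have h4 := Real.Gamma_add_one (s := s - 1) (ne_of_gt h1)
    rw [show s - 1 + 1 = s by ring] at h4
    exact h4
  have hlog : Real.log (Real.Gamma s) - Real.log (Real.Gamma (s - 1)) = Real.log (s - 1) := by
    rw [hG, Real.log_mul (ne_of_gt h1) (ne_of_gt (Real.Gamma_pos_of_pos h1))]
    ring
  rw [show s - (s - 1) = 1 by ring, div_one, hlog] at key
  have h5 := (le_div_iff₀ (by linarith : (0:ℝ) < t - s)).mp key
  linarith [mul_comm (Real.log (s - 1)) (t - s)]

theorem log_gamma_ratio_completely_monotone_iff (a b c d : ℝ)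
    (ha : 0 < a) (hc : 0 < c) :
    CompletelyMonotoneOn
      (fun x => Real.log (Real.Gamma (a * x + b) / Real.Gamma (c * x + d)))
      (Set.Ioi (max (-b / a) (-d / c))) ↔ a = c ∧ b = d := by
  set α := max (-b / a) (-d / c) with hαdef
  constructor
  · rintro ⟨hsm, hder⟩
    have hu : ∀ x ∈ Set.Ioi α, 0 < a * x + b := by
      intro x hx
      have h1 : -b / a < x := lt_of_le_of_lt (le_max_left _ _) hx
      have h2 : -b < x * a := (div_lt_iff₀ ha).mp h1
      linarith [mul_comm x a]
    have hv : ∀ x ∈ Set.Ioi α, 0 < c * x + d := by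
      intro x hx
      have h1 : -d / c < x := lt_of_le_of_lt (le_max_right _ _) hx
      have h2 : -d < x * c := (div_lt_iff₀ hc).mp h1
      linarith [mul_comm x c]
    have h0 : ∀ x ∈ Set.Ioi α,
        Real.log (Real.Gamma (c * x + d)) ≤ Real.log (Real.Gamma (a * x + b)) := by
      intro x hx
      have h1 := hder 0 x hx
      simp only [pow_zero, one_mul, iteratedDerivWithin_zero] at h1
      rw [Real.log_div (ne_of_gt (Real.Gamma_pos_of_pos (hu x hx)))
        (ne_of_gt (Real.Gamma_pos_of_pos (hv x hx)))] at h1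
      linarith
    have hA : AntitoneOn
        (fun x => Real.log (Real.Gamma (a * x + b) / Real.Gamma (c * x + d)))
        (Set.Ioi α) := by
      apply antitoneOn_of_deriv_nonpos (convex_Ioi α) hsm.continuousOn
      · rw [interior_Ioi]
        exact hsm.differentiableOn (by simp)
      · intro x hx
        rw [interior_Ioi] at hx
        have h1 := hder 1 x hx
        rw [iteratedDerivWithin_one,
          derivWithin_of_isOpen isOpen_Ioi hx] at h1
        simp only [pow_one, neg_one_mul, neg_nonneg] at h1
        exact h1
    rcases lt_trichotomy a c with hac | hac | hac
    · exfalso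
      set x := max (α + 1) (max ((3 - b) / a) ((b - d) / (c - a) + 1)) with hxdef
      have hxI : x ∈ Set.Ioi α := lt_of_lt_of_le (by linarith : α < α + 1) (le_max_left _ _)
      have h3 : 3 ≤ a * x + b := by
        have h4 : (3 - b) / a ≤ x := le_trans (le_max_left _ _) (le_max_right _ _)
        have h5 : 3 - b ≤ x * a := (div_le_iff₀ ha).mp h4
        linarith [mul_comm x a]
      have h6 : (b - d) / (c - a) < x :=
        lt_of_lt_of_le (by linarith) (le_trans (le_max_right _ _) (le_max_right _ _))
      have h7 : b - d < x * (c - a) := (div_lt_iff₀ (by linarith)).mp h6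
      have hlt : a * x + b < c * x + d := by nlinarith [mul_sub x c a, mul_comm x c, mul_comm x a]
      have hs := gamma_log_slope (s := a * x + b) (t := c * x + d) (by linarith) hlt
      have hlog2 : 0 < Real.log (a * x + b - 1) := Real.log_pos (by linarith)
      have h8 := h0 x hxI
      nlinarith [mul_pos (by linarith : (0:ℝ) < c * x + d - (a * x + b)) hlog2]
    · subst hac
      refine ⟨rfl, ?_⟩
      rcases lt_trichotomy b d with hbd | hbd | hbd
      · exfalso
        set x := max (α + 1) ((3 - b) / a) with hxdef
        have hxI : x ∈ Set.Ioi α := lt_of_lt_of_le (by linarith : α < α + 1) (le_max_left _ _)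
        have h3 : 3 ≤ a * x + b := by
          have h5 : 3 - b ≤ x * a := (div_le_iff₀ ha).mp (le_max_right _ _)
          linarith [mul_comm x a]
        have hlt : a * x + b < a * x + d := by linarith
        have hs := gamma_log_slope (s := a * x + b) (t := a * x + d) (by linarith) hlt
        have hlog2 : 0 < Real.log (a * x + b - 1) := Real.log_pos (by linarith)
        have h8 := h0 x hxI
        nlinarith [mul_pos (by linarith : (0:ℝ) < a * x + d - (a * x + b)) hlog2]
      · exact hbd
      · exfalso
        set x0 := α + 1 with hx0def
        have hx0I : x0 ∈ Set.Ioi α := by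
          simp only [hx0def, Set.mem_Ioi]; linarith
        set M := Real.log (Real.Gamma (a * x0 + b) / Real.Gamma (a * x0 + d)) with hMdef
        set E := Real.exp ((M + 1) / (b - d)) with hEdef
        set x := max x0 (max ((3 - d) / a) ((E + 1 - d) / a)) with hxdef
        have hx0x : x0 ≤ x := le_max_left _ _
        have hxI : x ∈ Set.Ioi α := lt_of_lt_of_le (by linarith) hx0x
        have hsd : 3 ≤ a * x + d := by
          have h5 : 3 - d ≤ x * a :=
            (div_le_iff₀ ha).mp (le_trans (le_max_left _ _) (le_max_right _ _))
          linarith [mul_comm x a]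
        have hsE : E ≤ a * x + d - 1 := by
          have h5 : E + 1 - d ≤ x * a :=
            (div_le_iff₀ ha).mp (le_trans (le_max_right _ _) (le_max_right _ _))
          linarith [mul_comm x a]
        have hlt : a * x + d < a * x + b := by linarith
        have hs := gamma_log_slope (s := a * x + d) (t := a * x + b) (by linarith) hlt
        rw [show a * x + b - (a * x + d) = b - d by ring] at hs
        have hElog : (M + 1) / (b - d) ≤ Real.log (a * x + d - 1) := by
          rw [← Real.log_exp ((M + 1) / (b - d))]
          exact (Real.log_le_log_iff (Real.exp_pos _) (by linarith)).mpr hsE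
        have hMle : M + 1 ≤ (b - d) * Real.log (a * x + d - 1) := by
          have h9 := mul_le_mul_of_nonneg_left hElog (by linarith : (0:ℝ) ≤ b - d)
          have h10 : (b - d) * ((M + 1) / (b - d)) = M + 1 := by
            rw [mul_comm, div_mul_cancel₀ _ (by linarith : b - d ≠ 0)]
          linarith
        have hfx := hA hx0I hxI hx0x
        simp only at hfx
        rw [Real.log_div (ne_of_gt (Real.Gamma_pos_of_pos (hu x hxI)))
          (ne_of_gt (Real.Gamma_pos_of_pos (hv x hxI)))] at hfx
        linarith
    · exfalso
      set x0 := α + 1 with hx0def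
      have hx0I : x0 ∈ Set.Ioi α := by
        simp only [hx0def, Set.mem_Ioi]; linarith
      set M := Real.log (Real.Gamma (a * x0 + b) / Real.Gamma (c * x0 + d)) with hMdef
      have hlog2pos : 0 < Real.log 2 := Real.log_pos (by norm_num)
      set K := max 1 ((M + 1) / Real.log 2) with hKdef
      have hK1 : (1:ℝ) ≤ K := le_max_left _ _
      set x := max x0 (max ((3 - d) / c) ((K + d - b) / (a - c))) with hxdef
      have hx0x : x0 ≤ x := le_max_left _ _
      have hxI : x ∈ Set.Ioi α := lt_of_lt_of_le (by linarith) hx0x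
      have hsd : 3 ≤ c * x + d := by
        have h5 : 3 - d ≤ x * c :=
          (div_le_iff₀ hc).mp (le_trans (le_max_left _ _) (le_max_right _ _))
        linarith [mul_comm x c]
      have hKle : K ≤ a * x + b - (c * x + d) := by
        have h5 : K + d - b ≤ x * (a - c) :=
          (div_le_iff₀ (by linarith)).mp (le_trans (le_max_right _ _) (le_max_right _ _))
        nlinarith [mul_sub x a c, mul_comm x a, mul_comm x c]
      have hlt : c * x + d < a * x + b := by linarith
      have hs := gamma_log_slope (s := c * x + d) (t := a * x + b) (by linarith) hlt
      have hlog2 : Real.log 2 ≤ Real.log (c * x + d - 1) :=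
        (Real.log_le_log_iff (by norm_num) (by linarith)).mpr (by linarith)
      have hKbig : M + 1 ≤ K * Real.log 2 := by
        have h9 : (M + 1) / Real.log 2 ≤ K := le_max_right _ _
        have h10 := (div_le_iff₀ hlog2pos).mp h9
        linarith
      have hfx := hA hx0I hxI hx0x
      simp only at hfx
      rw [Real.log_div (ne_of_gt (Real.Gamma_pos_of_pos (hu x hxI)))
        (ne_of_gt (Real.Gamma_pos_of_pos (hv x hxI)))] at hfx
      nlinarith [hs, hKle, hK1, hlog2, hlog2pos, hKbig, hfx]
  · rintro ⟨rfl, rfl⟩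
    have hfz : (fun x : ℝ => Real.log (Real.Gamma (a * x + b) / Real.Gamma (a * x + b)))
        = fun _ => (0:ℝ) := by
      funext x
      rcases eq_or_ne (Real.Gamma (a * x + b)) 0 with h | h
      · simp [h]
      · rw [div_self h, Real.log_one]
    rw [hfz]
    refine ⟨contDiffOn_const, fun n x hx => ?_⟩
    rw [aux_iter_zero (uniqueDiffOn_Ioi _) n x hx, mul_zero]
end

section
/- Let a, b ≥ 0 with 0 < 1 - b + a < 1 (equivalently a < b < a + 1), let β ≤ b - a, and let α ≤ 1. Then the function f_{α,β}(x) := (x + a)^α · [ψ(x + b) - ψ(x + a) - β/(x + a)] is completely monotone on (-a, ∞). -/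
open Set Real

noncomputable def digamma (x : ℝ) : ℝ := deriv Real.Gamma x / Real.Gamma x

open MeasureTheory Filter Topology
open scoped ContDiff

lemma completelyMonotoneOn_of_seq {c : ℝ} {f : ℝ → ℝ} (F : ℕ → ℝ → ℝ)
    (hF0 : ∀ x ∈ Ioi c, f x = F 0 x)
    (hFd : ∀ n, ∀ x ∈ Ioi c, HasDerivAt (F n) (F (n+1) x) x)
    (hFs : ∀ n, ∀ x ∈ Ioi c, 0 ≤ (-1:ℝ)^n * F n x) :
    CompletelyMonotoneOn f (Ioi c) := by
  have hUD : UniqueDiffOn ℝ (Ioi c) := (isOpen_Ioi).uniqueDiffOn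
  have hdiff : ∀ n, DifferentiableOn ℝ (F n) (Ioi c) := fun n x hx =>
    ((hFd n x hx).differentiableAt).differentiableWithinAt
  have hcd : ∀ (m : ℕ) (n : ℕ), ContDiffOn ℝ m (F n) (Ioi c) := by
    intro m
    induction m with
    | zero => exact fun n => contDiffOn_zero.2 (hdiff n).continuousOn
    | succ m ih =>
      intro n
      have : (m + 1 : ℕ) = ((m : WithTop ℕ∞) + 1) := by norm_cast
      rw [show ((m + 1 : ℕ) : WithTop ℕ∞) = (m : WithTop ℕ∞) + 1 by norm_cast,
        contDiffOn_succ_iff_derivWithin hUD]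
      refine ⟨hdiff n, by simp, ?_⟩
      refine (ih (n+1)).congr ?_
      intro x hx
      rw [derivWithin_of_isOpen isOpen_Ioi hx, (hFd n x hx).deriv]
  have hiter : ∀ n, ∀ x ∈ Ioi c, iteratedDerivWithin n f (Ioi c) x = F n x := by
    intro n
    induction n with
    | zero => intro x hx; simpa [iteratedDerivWithin_zero] using hF0 x hx
    | succ n ih =>
      intro x hx
      rw [iteratedDerivWithin_succ,
        derivWithin_congr (fun y hy => ih y hy) (ih x hx),
        derivWithin_of_isOpen isOpen_Ioi hx, (hFd n x hx).deriv]
  constructor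
  · refine ContDiffOn.congr ?_ hF0
    rw [show ((⊤ : ℕ∞) : WithTop ℕ∞) = ∞ from rfl, contDiffOn_infty]
    exact fun m => hcd m 0
  · intro n x hx
    rw [hiter n x hx]
    exact hFs n x hx




lemma Gamma_diffAt {z : ℝ} (hz : 0 < z) : DifferentiableAt ℝ Real.Gamma z :=
  Real.differentiableAt_Gamma fun m =>
    ne_of_gt (lt_of_le_of_lt (neg_nonpos.mpr (Nat.cast_nonneg m)) hz)

lemma digamma_rec {y : ℝ} (hy : 0 < y) : digamma (y + 1) = digamma y + 1 / y := by
  have hΓy := Real.Gamma_pos_of_pos hy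
  have h1 : HasDerivAt (fun x => Real.Gamma (x + 1)) (deriv Real.Gamma (y + 1)) y :=
    (Gamma_diffAt (by linarith)).hasDerivAt.comp_add_const
  have h2 : HasDerivAt (fun x => x * Real.Gamma x)
      (1 * Real.Gamma y + y * deriv Real.Gamma y) y :=
    (hasDerivAt_id y).mul (Gamma_diffAt hy).hasDerivAt
  have heq : (fun x => Real.Gamma (x + 1)) =ᶠ[𝓝 y] fun x => x * Real.Gamma x := by
    filter_upwards [eventually_gt_nhds hy] with x hx
    exact Real.Gamma_add_one hx.ne'
  have h3 : HasDerivAt (fun x => Real.Gamma (x + 1))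
      (1 * Real.Gamma y + y * deriv Real.Gamma y) y := h2.congr_of_eventuallyEq heq
  have hkey : deriv Real.Gamma (y + 1) = Real.Gamma y + y * deriv Real.Gamma y := by
    have := h1.unique h3; linarith [this]
  have hΓ1 : Real.Gamma (y + 1) = y * Real.Gamma y := Real.Gamma_add_one hy.ne'
  rw [digamma, digamma, hkey, hΓ1]
  field_simp
  ring

lemma digamma_hasDerivAt_logGamma {z : ℝ} (hz : 0 < z) :
    HasDerivAt (Real.log ∘ Real.Gamma) (digamma z) z := by
  simpa [digamma, div_eq_mul_inv, mul_comm] using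
    (Real.hasDerivAt_log (Real.Gamma_pos_of_pos hz).ne').comp z (Gamma_diffAt hz).hasDerivAt

lemma digamma_mono {x y : ℝ} (hx : 0 < x) (hxy : x ≤ y) : digamma x ≤ digamma y := by
  rcases eq_or_lt_of_le hxy with rfl | h
  · exact le_rfl
  have hy : 0 < y := lt_trans hx h
  have hc := Real.convexOn_log_Gamma
  have d1 := (digamma_hasDerivAt_logGamma hx)
  have d2 := (digamma_hasDerivAt_logGamma hy)
  have h1 : digamma x ≤ slope (Real.log ∘ Real.Gamma) x y := by
    have := hc.deriv_le_slope (mem_Ioi.mpr hx) (mem_Ioi.mpr hy) h d1.differentiableAt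
    rwa [d1.deriv] at this
  have h2 : slope (Real.log ∘ Real.Gamma) x y ≤ digamma y := by
    have := hc.slope_le_deriv (mem_Ioi.mpr hx) (mem_Ioi.mpr hy) h d2.differentiableAt
    rwa [d2.deriv] at this
  linarith

lemma digamma_diff_rec {z δ : ℝ} (hz : 0 < z) (hδ : 0 < δ) :
    digamma (z + 1 + δ) - digamma (z + 1) =
      digamma (z + δ) - digamma z - (1 / z - 1 / (z + δ)) := by
  have h1 : digamma (z + 1) = digamma z + 1 / z := digamma_rec hz
  have h2 : digamma (z + δ + 1) = digamma (z + δ) + 1 / (z + δ) := digamma_rec (by linarith)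
  have : z + 1 + δ = z + δ + 1 := by ring
  rw [this, h2, h1]; ring

lemma hasSum_digamma_diff {y δ : ℝ} (hy : 0 < y) (hδ0 : 0 < δ) (hδ1 : δ ≤ 1) :
    HasSum (fun k : ℕ => 1 / (y + k) - 1 / (y + δ + k))
      (digamma (y + δ) - digamma y) := by
  set D : ℝ → ℝ := fun z => digamma (z + δ) - digamma z with hD
  have hpos : ∀ k : ℕ, (0:ℝ) < y + k := fun k => by positivity
  have hpartial : ∀ N : ℕ, ∑ k ∈ Finset.range N, (1 / (y + k) - 1 / (y + δ + k))
      = D y - D (y + N) := by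
    intro N
    induction N with
    | zero => simp
    | succ N ih =>
      rw [Finset.sum_range_succ, ih]
      have hrec := digamma_diff_rec (z := y + N) (hpos N) hδ0
      have e1 : y + (N:ℝ) + 1 = y + (N + 1 : ℕ) := by push_cast; ring
      have e2 : y + δ + (N:ℝ) = y + (N:ℝ) + δ := by ring
      have e3 : y + (N:ℝ) + 1 + δ = y + ((N:ℕ)+1 : ℕ) + δ := by push_cast; ring
      simp only [hD]
      rw [e2, ← e1]
      push_cast at hrec ⊢
      linarith [hrec]
  have hmono : ∀ z : ℝ, 0 < z → 0 ≤ D z ∧ D z ≤ 1 / z := by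
    intro z hz
    constructor
    · exact sub_nonneg.mpr (digamma_mono hz (by linarith))
    · have h1 : digamma (z + δ) ≤ digamma (z + 1) := digamma_mono (by linarith) (by linarith)
      have h2 : digamma (z + 1) = digamma z + 1 / z := digamma_rec hz
      simp only [hD]; linarith
  have htail : Tendsto (fun N : ℕ => D (y + N)) atTop (𝓝 0) := by
    have hb : Tendsto (fun N : ℕ => 1 / (y + N)) atTop (𝓝 0) := by
      simp only [one_div]
      exact (tendsto_atTop_add_const_left _ y tendsto_natCast_atTop_atTop).inv_tendsto_atTop
    refine squeeze_zero (fun N => (hmono _ (hpos N)).1) (fun N => (hmono _ (hpos N)).2) hb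
  have hnonneg : ∀ k : ℕ, 0 ≤ 1 / (y + k) - 1 / (y + δ + k) := by
    intro k
    have h1 : (0:ℝ) < y + k := hpos k
    have h2 : (0:ℝ) < y + δ + k := by linarith
    have := one_div_le_one_div_of_le h1 (by linarith : y + (k:ℝ) ≤ y + δ + k)
    linarith
  rw [hasSum_iff_tendsto_nat_of_nonneg hnonneg]
  have : Tendsto (fun N : ℕ => D y - D (y + N)) atTop (𝓝 (D y - 0)) :=
    tendsto_const_nhds.sub htail
  simp only [sub_zero] at this
  convert this using 2 with N
  · exact hpartial N

lemma natcast_gt_neg_one (n : ℕ) : (-1:ℝ) < (n:ℝ) :=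
  lt_of_lt_of_le neg_one_lt_zero (Nat.cast_nonneg n)

lemma integrableOn_pow_mul_exp_neg_mul {n : ℕ} {y : ℝ} (hy : 0 < y) :
    IntegrableOn (fun t : ℝ => t ^ n * Real.exp (-y * t)) (Ioi 0) := by
  have h := integrableOn_rpow_mul_exp_neg_mul_rpow (s := (n:ℝ)) (p := 1) (b := y)
    (natcast_gt_neg_one n) one_pos hy
  refine h.congr_fun (fun t ht => ?_) measurableSet_Ioi
  simp [Real.rpow_one, Real.rpow_natCast]

lemma integral_pow_mul_exp_neg_mul {n : ℕ} {y : ℝ} (hy : 0 < y) :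
    ∫ t in Ioi (0:ℝ), t ^ n * Real.exp (-y * t) = n.factorial / y ^ (n + 1) := by
  have h := integral_rpow_mul_exp_neg_mul_rpow (p := 1) (q := (n:ℝ)) (b := y) one_pos
    (natcast_gt_neg_one n) hy
  have hcongr : ∫ t in Ioi (0:ℝ), t ^ n * Real.exp (-y * t)
      = ∫ t in Ioi (0:ℝ), t ^ ((n:ℝ)) * Real.exp (-y * t ^ (1:ℝ)) := by
    refine setIntegral_congr_fun measurableSet_Ioi (fun t ht => ?_)
    simp [Real.rpow_one, Real.rpow_natCast]
  rw [hcongr, h]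
  rw [div_one, div_one, div_one, Real.Gamma_nat_eq_factorial n,
    show (-((n:ℝ) + 1)) = -(((n+1 : ℕ) : ℝ)) by push_cast; ring,
    Real.rpow_neg hy.le, Real.rpow_natCast]
  field_simp

lemma exp_convex_ineq {δ t : ℝ} (h0 : 0 ≤ δ) (h1 : δ ≤ 1) :
    Real.exp (δ * t) ≤ 1 - δ + δ * Real.exp t := by
  have := convexOn_exp.2 (mem_univ (0:ℝ)) (mem_univ t) (by linarith : (0:ℝ) ≤ 1 - δ) h0 (by ring)
  simpa [smul_eq_mul] using this

noncomputable def phi (δ β t : ℝ) : ℝ := (1 - Real.exp (-δ * t)) / (1 - Real.exp (-t)) - β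

lemma one_sub_exp_neg_pos {t : ℝ} (ht : 0 < t) : 0 < 1 - Real.exp (-t) := by
  have : Real.exp (-t) < 1 := Real.exp_lt_one_iff.mpr (by linarith)
  linarith

lemma phi_lower {δ β t : ℝ} (hδ0 : 0 ≤ δ) (hδ1 : δ ≤ 1) (ht : 0 < t) :
    δ - β ≤ phi δ β t := by
  have hden := one_sub_exp_neg_pos ht
  have key := exp_convex_ineq (t := -t) hδ0 hδ1
  rw [phi, sub_le_sub_iff_right, le_div_iff₀ hden]
  have : δ * -t = -δ * t := by ring
  rw [this] at key
  nlinarith [key]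

lemma phi_upper {δ β t : ℝ} (hδ0 : 0 ≤ δ) (hδ1 : δ ≤ 1) (ht : 0 < t) :
    phi δ β t ≤ 1 - β := by
  have hden := one_sub_exp_neg_pos ht
  rw [phi, sub_le_sub_iff_right, div_le_one hden]
  have : Real.exp (-t) ≤ Real.exp (-δ * t) := by
    apply Real.exp_le_exp.mpr; nlinarith
  linarith

lemma phi_hasDerivAt {δ β t : ℝ} (ht : 0 < t) :
    HasDerivAt (phi δ β)
      ((δ * Real.exp (-δ * t) * (1 - Real.exp (-t)) -
        (1 - Real.exp (-δ * t)) * Real.exp (-t)) / (1 - Real.exp (-t)) ^ 2) t := by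
  have hden := (one_sub_exp_neg_pos ht).ne'
  have h1 : HasDerivAt (fun t : ℝ => 1 - Real.exp (-δ * t)) (δ * Real.exp (-δ * t)) t := by
    have := (((hasDerivAt_id t).const_mul (-δ)).exp).const_sub 1
    simpa [mul_comm] using this
  have h2 : HasDerivAt (fun t : ℝ => 1 - Real.exp (-t)) (Real.exp (-t)) t := by
    have := (((hasDerivAt_id t).const_mul (-1:ℝ)).exp).const_sub 1
    simpa using this
  exact (h1.div h2 hden).sub_const β

lemma phi_monotoneOn {δ β : ℝ} (hδ0 : 0 ≤ δ) (hδ1 : δ ≤ 1) :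
    MonotoneOn (phi δ β) (Ioi 0) := by
  have hint : interior (Ioi (0:ℝ)) = Ioi 0 := interior_Ioi
  refine monotoneOn_of_deriv_nonneg (convex_Ioi 0) ?_ ?_ ?_
  · intro t ht
    exact ((phi_hasDerivAt ht).continuousAt).continuousWithinAt
  · rw [hint]; intro t ht
    exact (phi_hasDerivAt ht).differentiableAt.differentiableWithinAt
  · rw [hint]; intro t ht
    rw [(phi_hasDerivAt ht).deriv]
    have hden := one_sub_exp_neg_pos ht
    apply div_nonneg _ (by positivity)
    have key := exp_convex_ineq (t := t) hδ0 hδ1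
    have e1 : Real.exp (-δ * t) * Real.exp (δ * t) = 1 := by
      rw [← Real.exp_add]; simp
    have e2 : Real.exp (-t) * Real.exp t = 1 := by
      rw [← Real.exp_add]; simp
    have e3 : Real.exp (-δ * t) * Real.exp (-t) * Real.exp (δ * t) = Real.exp (-t) := by
      rw [← Real.exp_add, ← Real.exp_add]; ring_nf
    have e4 : Real.exp (-δ * t) * Real.exp (-t) * Real.exp t = Real.exp (-δ * t) := by
      rw [← Real.exp_add, ← Real.exp_add]; ring_nf
    have hmul := mul_le_mul_of_nonneg_left key
      (mul_pos (Real.exp_pos (-δ*t)) (Real.exp_pos (-t))).le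
    nlinarith [hmul, e3, e4, Real.exp_pos (-δ * t), Real.exp_pos (-t)]

noncomputable def Hf (δ β : ℝ) (n : ℕ) (y : ℝ) : ℝ :=
  ∫ t in Ioi (0:ℝ), t ^ n * Real.exp (-y * t) * phi δ β t

lemma phi_continuousOn (δ β : ℝ) : ContinuousOn (phi δ β) (Ioi 0) := by
  apply ContinuousOn.sub _ continuousOn_const
  apply ContinuousOn.div (by fun_prop) (by fun_prop)
  intro t ht
  exact (one_sub_exp_neg_pos ht).ne'

lemma Hf_meas (δ β : ℝ) (n : ℕ) (x : ℝ) :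
    AEStronglyMeasurable (fun t => t ^ n * Real.exp (-x * t) * phi δ β t)
      (volume.restrict (Ioi 0)) :=
  (Continuous.aestronglyMeasurable (by fun_prop)).mul
    ((phi_continuousOn δ β).aestronglyMeasurable measurableSet_Ioi)

section Hlemmas
variable {δ β : ℝ} (hδ0 : 0 < δ) (hδ1 : δ ≤ 1) (hβ : β ≤ δ)
include hδ0 hδ1 hβ

lemma phi_nonneg {t : ℝ} (ht : 0 < t) : 0 ≤ phi δ β t :=
  le_trans (by linarith) (phi_lower hδ0.le hδ1 ht)

lemma phi_abs_le {t : ℝ} (ht : 0 < t) : |phi δ β t| ≤ 1 - β :=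
  abs_le.mpr ⟨by linarith [phi_nonneg hδ0 hδ1 hβ ht, hδ1.trans (le_refl 1)],
    phi_upper hδ0.le hδ1 ht⟩

lemma Hf_integrable {n : ℕ} {x : ℝ} (hx : 0 < x) :
    IntegrableOn (fun t => t ^ n * Real.exp (-x * t) * phi δ β t) (Ioi 0) := by
  refine Integrable.mono' ((integrableOn_pow_mul_exp_neg_mul (n := n) hx).const_mul (1 - β))
    (Hf_meas δ β n x) ?_
  rw [ae_restrict_iff' measurableSet_Ioi]
  filter_upwards with t ht
  have ht' : (0:ℝ) < t := ht
  have h1 : (0:ℝ) ≤ t ^ n * Real.exp (-x * t) := by positivity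
  rw [Real.norm_eq_abs, abs_mul, abs_of_nonneg h1]
  calc t ^ n * Real.exp (-x * t) * |phi δ β t|
      ≤ t ^ n * Real.exp (-x * t) * (1 - β) :=
        mul_le_mul_of_nonneg_left (phi_abs_le hδ0 hδ1 hβ ht') h1
    _ = (1 - β) * (t ^ n * Real.exp (-x * t)) := by ring

lemma Hf_hasDerivAt {n : ℕ} {y : ℝ} (hy : 0 < y) :
    HasDerivAt (Hf δ β n) (-(Hf δ β (n+1) y)) y := by
  have main := hasDerivAt_integral_of_dominated_loc_of_deriv_le
    (F := fun x t => t ^ n * Real.exp (-x * t) * phi δ β t)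
    (F' := fun x t => -(t ^ (n+1) * Real.exp (-x * t) * phi δ β t))
    (x₀ := y) (s := Metric.ball y (y/2)) (μ := volume.restrict (Ioi 0))
    (bound := fun t => (1 - β) * (t ^ (n+1) * Real.exp (-(y/2) * t)))
    (Metric.ball_mem_nhds y (half_pos hy))
    (Eventually.of_forall (fun x => Hf_meas δ β n x))
    (Hf_integrable hδ0 hδ1 hβ hy)
    ((Hf_meas δ β (n+1) y).neg)
    ?_ ((integrableOn_pow_mul_exp_neg_mul (half_pos hy)).const_mul (1 - β)) ?_
  · have h2 := main.2
    rw [MeasureTheory.integral_neg] at h2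
    exact h2
  · rw [ae_restrict_iff' measurableSet_Ioi]
    filter_upwards with t ht
    intro x hx
    have ht' : (0:ℝ) < t := ht
    have hx2 : y/2 ≤ x := by
      have := abs_lt.1 (by simpa [Real.dist_eq] using hx)
      linarith [this.1]
    have h1 : (0:ℝ) ≤ t ^ (n+1) * Real.exp (-x * t) := by positivity
    rw [norm_neg, Real.norm_eq_abs, abs_mul, abs_of_nonneg h1]
    have hexp : Real.exp (-x * t) ≤ Real.exp (-(y/2) * t) := by
      apply Real.exp_le_exp.mpr
      nlinarith
    calc t ^ (n+1) * Real.exp (-x * t) * |phi δ β t|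
        ≤ t ^ (n+1) * Real.exp (-(y/2) * t) * (1 - β) := by
          apply mul_le_mul
          · exact mul_le_mul_of_nonneg_left hexp (by positivity)
          · exact phi_abs_le hδ0 hδ1 hβ ht'
          · exact abs_nonneg _
          · positivity
      _ = (1 - β) * (t ^ (n+1) * Real.exp (-(y/2) * t)) := by ring
  · rw [ae_restrict_iff' measurableSet_Ioi]
    filter_upwards with t ht
    intro x hx
    have hE : HasDerivAt (fun x : ℝ => Real.exp (-x * t)) (-t * Real.exp (-x * t)) x := by
      have := (((hasDerivAt_id x).neg).mul_const t).exp
      simpa [neg_mul, mul_comm] using this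
    have := (hE.const_mul (t ^ n)).mul_const (phi δ β t)
    exact this.congr_deriv (by ring)

end Hlemmas

lemma integrableOn_exp_neg_mul {c : ℝ} (hc : 0 < c) :
    IntegrableOn (fun t : ℝ => Real.exp (-c * t)) (Ioi 0) := by
  have := integrableOn_pow_mul_exp_neg_mul (n := 0) hc
  simpa using this

lemma integral_exp_neg_mul {c : ℝ} (hc : 0 < c) :
    ∫ t in Ioi (0:ℝ), Real.exp (-c * t) = 1 / c := by
  have := integral_pow_mul_exp_neg_mul (n := 0) hc
  simpa using this

lemma Hf_zero_repr {δ β y : ℝ} (hδ0 : 0 < δ) (hδ1 : δ ≤ 1) (hy : 0 < y) :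
    Hf δ β 0 y = digamma (y + δ) - digamma y - β / y := by
  classical
  set u : ℕ → ℝ → ℝ := fun k t => Real.exp (-(y+k) * t) - Real.exp (-(y+δ+k) * t) with hu
  have hupos : ∀ k : ℕ, ∀ t ∈ Ioi (0:ℝ), 0 ≤ u k t := by
    intro k t ht
    have ht' : (0:ℝ) < t := ht
    simp only [hu, sub_nonneg]
    apply Real.exp_le_exp.mpr
    nlinarith
  have huint : ∀ k : ℕ, IntegrableOn (u k) (Ioi 0) :=
    fun k => (integrableOn_exp_neg_mul (by positivity)).sub
      (integrableOn_exp_neg_mul (by positivity : (0:ℝ) < y + δ + k))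
  have huval : ∀ k : ℕ, ∫ t in Ioi (0:ℝ), u k t = 1/(y+k) - 1/(y+δ+k) := by
    intro k
    rw [MeasureTheory.integral_sub (integrableOn_exp_neg_mul (by positivity))
      (integrableOn_exp_neg_mul (by positivity : (0:ℝ) < y + δ + k)),
      integral_exp_neg_mul (by positivity), integral_exp_neg_mul
      (by positivity : (0:ℝ) < y + δ + k)]
  have hsum := hasSum_digamma_diff hy hδ0 hδ1
  have hnorm : (fun k : ℕ => ∫ t in Ioi (0:ℝ), ‖u k t‖) =
      fun k : ℕ => 1/(y+k) - 1/(y+δ+k) := by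
    funext k
    rw [← huval k]
    refine setIntegral_congr_fun measurableSet_Ioi (fun t ht => ?_)
    exact Real.norm_of_nonneg (hupos k t ht)
  have hsummable : Summable (fun k : ℕ => ∫ t in Ioi (0:ℝ), ‖u k t‖) := by
    rw [hnorm]; exact hsum.summable
  have hswap := MeasureTheory.integral_tsum_of_summable_integral_norm huint hsummable
  have htsum_int : ∑' k : ℕ, ∫ t in Ioi (0:ℝ), u k t = digamma (y + δ) - digamma y := by
    have : (fun k : ℕ => ∫ t in Ioi (0:ℝ), u k t) = fun k : ℕ => 1/(y+k) - 1/(y+δ+k) :=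
      funext huval
    rw [this, hsum.tsum_eq]
  have hpt : ∀ t ∈ Ioi (0:ℝ), (∑' k : ℕ, u k t)
      = Real.exp (-y * t) * phi δ 0 t := by
    intro t ht
    have ht' : (0:ℝ) < t := ht
    have hr0 : (0:ℝ) ≤ Real.exp (-t) := (Real.exp_pos _).le
    have hr1 : Real.exp (-t) < 1 := Real.exp_lt_one_iff.mpr (by linarith)
    have hterm : ∀ k : ℕ, u k t
        = (Real.exp (-y*t) - Real.exp (-(y+δ)*t)) * Real.exp (-t) ^ k := by
      intro k
      have e1 : Real.exp (-(y+k) * t) = Real.exp (-y*t) * Real.exp (-t) ^ k := by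
        rw [← Real.exp_nat_mul, ← Real.exp_add]; ring_nf
      have e2 : Real.exp (-(y+δ+k) * t) = Real.exp (-(y+δ)*t) * Real.exp (-t) ^ k := by
        rw [← Real.exp_nat_mul, ← Real.exp_add]; ring_nf
      simp only [hu]; rw [e1, e2]; ring
    rw [funext hterm] at *
    rw [tsum_mul_left, tsum_geometric_of_lt_one hr0 hr1]
    have e3 : Real.exp (-(y+δ)*t) = Real.exp (-y*t) * Real.exp (-δ*t) := by
      rw [← Real.exp_add]; ring_nf
    rw [phi, e3]
    have hden := (one_sub_exp_neg_pos ht').ne'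
    field_simp
    ring
  have hint1 : ∫ t in Ioi (0:ℝ), (∑' k : ℕ, u k t)
      = ∫ t in Ioi (0:ℝ), Real.exp (-y * t) * phi δ 0 t :=
    setIntegral_congr_fun measurableSet_Ioi hpt
  have hphi0 : ∫ t in Ioi (0:ℝ), Real.exp (-y * t) * phi δ 0 t
      = digamma (y + δ) - digamma y := by
    rw [← hint1, ← hswap, htsum_int]
  -- now split Hf
  have hint2 : IntegrableOn (fun t : ℝ => Real.exp (-y*t) * phi δ 0 t) (Ioi 0) := by
    have := Hf_integrable (δ := δ) (β := 0) hδ0 hδ1 hδ0.le (n := 0) hy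
    simpa using this
  have hsplit : Hf δ β 0 y = (∫ t in Ioi (0:ℝ), Real.exp (-y*t) * phi δ 0 t)
      - ∫ t in Ioi (0:ℝ), β * Real.exp (-y*t) := by
    rw [Hf, ← MeasureTheory.integral_sub hint2 ((integrableOn_exp_neg_mul hy).const_mul β)]
    refine setIntegral_congr_fun measurableSet_Ioi (fun t ht => ?_)
    simp only [phi, pow_zero, one_mul]
    ring
  rw [hsplit, hphi0, MeasureTheory.integral_const_mul, integral_exp_neg_mul hy]
  ring

section Hsign
variable {δ β : ℝ} (hδ0 : 0 < δ) (hδ1 : δ ≤ 1) (hβ : β ≤ δ)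
include hδ0 hδ1 hβ

lemma Hf_nonneg {n : ℕ} {y : ℝ} (hy : 0 < y) : 0 ≤ Hf δ β n y := by
  apply setIntegral_nonneg measurableSet_Ioi
  intro t ht
  have ht' : (0:ℝ) < t := ht
  have := phi_nonneg hδ0 hδ1 hβ ht'
  positivity

lemma Hf_sign {n : ℕ} {y : ℝ} (hn : 1 ≤ n) (hy : 0 < y) :
    (n:ℝ) * Hf δ β (n-1) y ≤ y * Hf δ β n y := by
  obtain ⟨m, rfl⟩ : ∃ m, n = m + 1 := ⟨n - 1, (Nat.succ_pred_eq_of_pos hn).symm⟩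
  simp only [Nat.add_sub_cancel]
  set c := phi δ β ((m+1 : ℕ) / y) with hc
  set P : ℝ → ℝ := fun t => (y * t ^ (m+1) - (m+1:ℕ) * t ^ m) * Real.exp (-y * t) with hP
  have i1 : IntegrableOn (fun t : ℝ => t ^ (m+1) * Real.exp (-y*t) * phi δ β t) (Ioi 0) :=
    Hf_integrable hδ0 hδ1 hβ hy
  have i2 : IntegrableOn (fun t : ℝ => t ^ m * Real.exp (-y*t) * phi δ β t) (Ioi 0) :=
    Hf_integrable hδ0 hδ1 hβ hy
  have j1 : IntegrableOn (fun t : ℝ => t ^ (m+1) * Real.exp (-y*t)) (Ioi 0) :=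
    integrableOn_pow_mul_exp_neg_mul hy
  have j2 : IntegrableOn (fun t : ℝ => t ^ m * Real.exp (-y*t)) (Ioi 0) :=
    integrableOn_pow_mul_exp_neg_mul hy
  have iP : IntegrableOn P (Ioi 0) := by
    refine MeasureTheory.IntegrableOn.congr_fun
      ((j1.const_mul y).sub (j2.const_mul ((m+1:ℕ) : ℝ))) (fun t ht => ?_) measurableSet_Ioi
    simp only [Pi.sub_apply, hP]; ring
  have iPphi : IntegrableOn (fun t => P t * phi δ β t) (Ioi 0) := by
    refine MeasureTheory.IntegrableOn.congr_fun
      ((i1.const_mul y).sub (i2.const_mul ((m+1:ℕ) : ℝ))) (fun t ht => ?_) measurableSet_Ioi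
    simp only [Pi.sub_apply, hP]; ring
  have hintP : ∫ t in Ioi (0:ℝ), P t = 0 := by
    have h' : ∫ t in Ioi (0:ℝ), P t
        = ∫ t in Ioi (0:ℝ), (y * (t ^ (m+1) * Real.exp (-y*t))
          - ((m+1:ℕ) : ℝ) * (t ^ m * Real.exp (-y*t))) :=
      setIntegral_congr_fun measurableSet_Ioi (fun t ht => by simp only [hP]; ring)
    rw [h', MeasureTheory.integral_sub (j1.const_mul y) (j2.const_mul ((m+1:ℕ) : ℝ)),
      MeasureTheory.integral_const_mul, MeasureTheory.integral_const_mul,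
      integral_pow_mul_exp_neg_mul hy, integral_pow_mul_exp_neg_mul hy]
    have hfact : ((m+1).factorial : ℝ) = ((m+1:ℕ) : ℝ) * (m.factorial : ℝ) := by
      rw [Nat.factorial_succ]; push_cast; ring
    field_simp [hfact]
    rw [hfact]
    ring
  have hdiff : y * Hf δ β (m+1) y - ((m+1:ℕ) : ℝ) * Hf δ β m y
      = ∫ t in Ioi (0:ℝ), P t * phi δ β t := by
    have h' : ∫ t in Ioi (0:ℝ), P t * phi δ β t
        = ∫ t in Ioi (0:ℝ), (y * (t ^ (m+1) * Real.exp (-y*t) * phi δ β t)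
          - ((m+1:ℕ) : ℝ) * (t ^ m * Real.exp (-y*t) * phi δ β t)) :=
      setIntegral_congr_fun measurableSet_Ioi (fun t ht => by simp only [hP]; ring)
    rw [h', MeasureTheory.integral_sub (i1.const_mul y) (i2.const_mul ((m+1:ℕ) : ℝ)),
      MeasureTheory.integral_const_mul, MeasureTheory.integral_const_mul, Hf, Hf]
  have iPc : IntegrableOn (fun t => P t * (phi δ β t - c)) (Ioi 0) := by
    refine MeasureTheory.IntegrableOn.congr_fun
      (iPphi.sub (iP.const_mul c)) (fun t ht => ?_) measurableSet_Ioi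
    simp only [Pi.sub_apply]; ring
  have hsplit : ∫ t in Ioi (0:ℝ), P t * phi δ β t
      = (∫ t in Ioi (0:ℝ), P t * (phi δ β t - c)) + c * ∫ t in Ioi (0:ℝ), P t := by
    have h' : ∫ t in Ioi (0:ℝ), P t * phi δ β t
        = ∫ t in Ioi (0:ℝ), (P t * (phi δ β t - c) + c * P t) :=
      setIntegral_congr_fun measurableSet_Ioi (fun t ht => by ring)
    rw [h', MeasureTheory.integral_add iPc (iP.const_mul c),
      MeasureTheory.integral_const_mul]
  have hpos : 0 ≤ ∫ t in Ioi (0:ℝ), P t * (phi δ β t - c) := by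
    apply setIntegral_nonneg measurableSet_Ioi
    intro t ht
    have ht' : (0:ℝ) < t := ht
    have hny : (0:ℝ) < ((m+1:ℕ) : ℝ) / y := by positivity
    rcases le_or_gt (((m+1:ℕ) : ℝ) / y) t with h | h
    · have h1 : 0 ≤ y * t - ((m+1:ℕ) : ℝ) := by
        rw [div_le_iff₀ hy] at h; nlinarith
      have h2 : c ≤ phi δ β t :=
        phi_monotoneOn hδ0.le hδ1 (mem_Ioi.mpr hny) (mem_Ioi.mpr ht') h
      have hPn : 0 ≤ P t := by
        simp only [hP]
        have heq : y * t ^ (m+1) - ((m+1:ℕ) : ℝ) * t ^ m = t ^ m * (y * t - ((m+1:ℕ) : ℝ)) := by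
          ring
        rw [heq]
        exact mul_nonneg (mul_nonneg (pow_nonneg ht'.le m) h1) (Real.exp_pos _).le
      exact mul_nonneg hPn (by linarith)
    · have h1 : y * t - ((m+1:ℕ) : ℝ) ≤ 0 := by
        rw [lt_div_iff₀ hy] at h; nlinarith
      have h2 : phi δ β t ≤ c :=
        phi_monotoneOn hδ0.le hδ1 (mem_Ioi.mpr ht') (mem_Ioi.mpr hny) h.le
      have hPn : P t ≤ 0 := by
        simp only [hP]
        have h3 : t ^ m * (y * t - ((m+1:ℕ):ℝ)) ≤ 0 :=
          mul_nonpos_of_nonneg_of_nonpos (pow_nonneg ht'.le m) h1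
        have heq : y * t ^ (m+1) - ((m+1:ℕ):ℝ) * t ^ m = t ^ m * (y * t - ((m+1:ℕ):ℝ)) := by
          ring
        rw [heq]
        exact mul_nonpos_of_nonpos_of_nonneg h3 (Real.exp_pos (-y*t)).le
      nlinarith [hPn, h2]
  have hzero : c * ∫ t in Ioi (0:ℝ), P t = 0 := by rw [hintP]; ring
  linarith [hdiff, hsplit, hpos, hzero]


end Hsign

noncomputable def seqProd (F G : ℕ → ℝ → ℝ) (n : ℕ) (x : ℝ) : ℝ :=
  ∑ k ∈ Finset.range (n+1), (n.choose k : ℝ) * (F k x * G (n-k) x)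

lemma seqProd_hasDerivAt {c : ℝ} {F G : ℕ → ℝ → ℝ}
    (hF : ∀ n, ∀ x ∈ Ioi c, HasDerivAt (F n) (F (n+1) x) x)
    (hG : ∀ n, ∀ x ∈ Ioi c, HasDerivAt (G n) (G (n+1) x) x)
    (n : ℕ) {x : ℝ} (hx : x ∈ Ioi c) :
    HasDerivAt (seqProd F G n) (seqProd F G (n+1) x) x := by
  have hterm : ∀ k ∈ Finset.range (n+1), HasDerivAt
      (fun x => (n.choose k : ℝ) * (F k x * G (n-k) x))
      ((n.choose k : ℝ) * (F (k+1) x * G (n-k) x + F k x * G (n-k+1) x)) x := by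
    intro k hk
    exact (((hF k x hx).mul (hG (n-k) x hx))).const_mul _
  have hsum := HasDerivAt.sum hterm
  rw [show seqProd F G n = ∑ i ∈ Finset.range (n + 1), fun x => (n.choose i : ℝ) * (F i x * G (n - i) x)
    from funext fun y => by simp [seqProd, Finset.sum_apply]]
  refine hsum.congr_deriv ?_; symm
  -- algebra: seqProd F G (n+1) x equals the sum of derivatives
  have hTsucc : ∀ k, k ≤ n → (n:ℕ) + 1 - (k+1) = n - k := fun k hk => by omega
  have hsub : ∀ k, k ≤ n → n - k + 1 = n + 1 - k := fun k hk => by omega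
  rw [seqProd]
  rw [Finset.sum_range_succ' (fun k => ((n+1).choose k : ℝ) * (F k x * G (n+1-k) x)) (n+1)]
  have e1 : ∀ k ∈ Finset.range (n+1),
      (((n+1).choose (k+1) : ℝ)) * (F (k+1) x * G (n+1-(k+1)) x)
      = (n.choose k : ℝ) * (F (k+1) x * G (n-k) x)
        + (n.choose (k+1) : ℝ) * (F (k+1) x * G (n-k) x) := by
    intro k hk
    have hk' : k ≤ n := by simpa using Nat.lt_succ_iff.mp (Finset.mem_range.mp hk)
    rw [hTsucc k hk', Nat.choose_succ_succ]
    push_cast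
    ring
  rw [Finset.sum_congr rfl e1, Finset.sum_add_distrib]
  simp only [mul_add, Finset.sum_add_distrib]
  have e5 : ∑ k ∈ Finset.range (n+2), (n.choose k : ℝ) * (F k x * G (n+1-k) x)
      = (∑ k ∈ Finset.range (n+1), (n.choose (k+1) : ℝ) * (F (k+1) x * G (n-k) x))
        + ((n+1).choose 0 : ℝ) * (F 0 x * G (n+1-0) x) := by
    rw [Finset.sum_range_succ' (fun k => (n.choose k : ℝ) * (F k x * G (n+1-k) x)) (n+1)]
    congr 1
    · refine Finset.sum_congr rfl (fun k hk => ?_)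
      have hk' : k ≤ n := by simpa using Nat.lt_succ_iff.mp (Finset.mem_range.mp hk)
      rw [hTsucc k hk']
    · simp
  have e6 : ∑ k ∈ Finset.range (n+2), (n.choose k : ℝ) * (F k x * G (n+1-k) x)
      = ∑ k ∈ Finset.range (n+1), (n.choose k : ℝ) * (F k x * G (n-k+1) x) := by
    rw [Finset.sum_range_succ]
    rw [Nat.choose_eq_zero_of_lt (by omega : n < n+1)]
    simp only [Nat.cast_zero, zero_mul, add_zero]
    refine Finset.sum_congr rfl (fun k hk => ?_)
    have hk' : k ≤ n := by simpa using Nat.lt_succ_iff.mp (Finset.mem_range.mp hk)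
    rw [hsub k hk']
  linarith [e5, e6]

lemma seqProd_zero (F G : ℕ → ℝ → ℝ) (x : ℝ) : seqProd F G 0 x = F 0 x * G 0 x := by
  simp [seqProd]

lemma seqProd_sign {c : ℝ} {F G : ℕ → ℝ → ℝ}
    (hF : ∀ n, ∀ x ∈ Ioi c, 0 ≤ (-1:ℝ)^n * F n x)
    (hG : ∀ n, ∀ x ∈ Ioi c, 0 ≤ (-1:ℝ)^n * G n x)
    (n : ℕ) {x : ℝ} (hx : x ∈ Ioi c) :
    0 ≤ (-1:ℝ)^n * seqProd F G n x := by
  rw [seqProd, Finset.mul_sum]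
  apply Finset.sum_nonneg
  intro k hk
  have hk' : k ≤ n := by simpa using Nat.lt_succ_iff.mp (Finset.mem_range.mp hk)
  have hpow : (-1:ℝ)^n = (-1:ℝ)^k * (-1:ℝ)^(n-k) := by
    rw [← pow_add]
    congr 1
    omega
  calc (0:ℝ) ≤ (n.choose k : ℝ) * (((-1:ℝ)^k * F k x) * ((-1:ℝ)^(n-k) * G (n-k) x)) := by
        apply mul_nonneg (by positivity)
        exact mul_nonneg (hF k x hx) (hG (n-k) x hx)
    _ = (-1:ℝ)^n * ((n.choose k : ℝ) * (F k x * G (n-k) x)) := by rw [hpow]; ring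

noncomputable def rpowSeq (a α : ℝ) (n : ℕ) (x : ℝ) : ℝ :=
  (∏ i ∈ Finset.range n, (α - 1 - i)) * (x + a) ^ (α - 1 - n)

lemma rpowSeq_hasDerivAt {a α : ℝ} (n : ℕ) {x : ℝ} (hx : x ∈ Ioi (-a)) :
    HasDerivAt (rpowSeq a α n) (rpowSeq a α (n+1) x) x := by
  have hxa : 0 < x + a := by simpa [neg_lt_iff_pos_add] using hx
  have h1 : HasDerivAt (fun x : ℝ => (x + a) ^ (α - 1 - n))
      ((α - 1 - n) * (x + a) ^ (α - 1 - n - 1)) x := by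
    have := (Real.hasDerivAt_rpow_const (x := x + a) (p := α - 1 - n)
      (Or.inl hxa.ne')).comp_add_const
    exact this
  have := h1.const_mul (∏ i ∈ Finset.range n, (α - 1 - i))
  refine this.congr_deriv ?_; symm
  rw [rpowSeq, Finset.prod_range_succ]
  have : α - 1 - ((n:ℝ) + 1) = α - 1 - n - 1 := by ring
  push_cast
  rw [this]
  ring

lemma rpowSeq_sign {a α : ℝ} (hα : α ≤ 1) (n : ℕ) {x : ℝ} (hx : x ∈ Ioi (-a)) :
    0 ≤ (-1:ℝ)^n * rpowSeq a α n x := by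
  have hxa : 0 < x + a := by simpa [neg_lt_iff_pos_add] using hx
  rw [rpowSeq, ← mul_assoc]
  apply mul_nonneg _ (Real.rpow_nonneg hxa.le _)
  have : (-1:ℝ)^n * ∏ i ∈ Finset.range n, (α - 1 - i)
      = ∏ i ∈ Finset.range n, (1 + i - α) := by
    rw [show (-1:ℝ)^n = ∏ _i ∈ Finset.range n, (-1:ℝ) by simp, ← Finset.prod_mul_distrib]
    refine Finset.prod_congr rfl (fun i hi => by ring)
  rw [this]
  apply Finset.prod_nonneg
  intro i hi
  have : (0:ℝ) ≤ i := Nat.cast_nonneg i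
  linarith


noncomputable def Gseq (δ β a : ℝ) (j : ℕ) (x : ℝ) : ℝ :=
  (-1:ℝ)^j * ((x + a) * Hf δ β j (x + a) - (j:ℝ) * Hf δ β (j-1) (x + a))

section Gseqlemmas
variable {δ β a : ℝ} (hδ0 : 0 < δ) (hδ1 : δ ≤ 1) (hβ : β ≤ δ)
include hδ0 hδ1 hβ

lemma Gseq_hasDerivAt (j : ℕ) {x : ℝ} (hx : x ∈ Ioi (-a)) :
    HasDerivAt (Gseq δ β a j) (Gseq δ β a (j+1) x) x := by
  have hxa : 0 < x + a := by simpa [neg_lt_iff_pos_add] using hx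
  have hH : ∀ m : ℕ, HasDerivAt (fun x => Hf δ β m (x + a)) (-(Hf δ β (m+1) (x + a))) x :=
    fun m => (Hf_hasDerivAt hδ0 hδ1 hβ hxa).comp_add_const
  have hA : HasDerivAt (fun x : ℝ => (x + a) * Hf δ β j (x + a))
      (1 * Hf δ β j (x + a) + (x + a) * -(Hf δ β (j+1) (x + a))) x :=
    ((hasDerivAt_id x).add_const a).mul (hH j)
  have hB : HasDerivAt (fun x : ℝ => (j:ℝ) * Hf δ β (j-1) (x + a))
      ((j:ℝ) * -(Hf δ β ((j-1)+1) (x + a))) x := (hH (j-1)).const_mul _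
  have htot := (hA.sub hB).const_mul ((-1:ℝ)^j)
  refine htot.congr_deriv ?_; symm
  rcases j with _ | m
  · simp [Gseq]
    ring
  · have hsub : (m + 1) - 1 = m := rfl
    have hsub2 : (m + 1 + 1) - 1 = m + 1 := rfl
    simp only [Gseq, hsub, hsub2]
    push_cast
    rw [pow_succ]
    ring

lemma Gseq_sign (j : ℕ) {x : ℝ} (hx : x ∈ Ioi (-a)) :
    0 ≤ (-1:ℝ)^j * Gseq δ β a j x := by
  have hxa : 0 < x + a := by simpa [neg_lt_iff_pos_add] using hx
  rw [Gseq, ← mul_assoc, ← pow_add]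
  have heven : Even (j + j) := ⟨j, rfl⟩
  rw [heven.neg_one_pow, one_mul]
  rcases j with _ | m
  · simp only [Nat.cast_zero, zero_mul, sub_zero]
    exact mul_nonneg hxa.le (Hf_nonneg hδ0 hδ1 hβ hxa)
  · exact sub_nonneg.mpr (Hf_sign hδ0 hδ1 hβ (Nat.succ_le_succ (Nat.zero_le m)) hxa)

end Gseqlemmas

theorem f_alpha_beta_completely_monotone (a b α β : ℝ)
    (ha : 0 ≤ a) (hb : 0 ≤ b) (h1 : 0 < 1 - b + a) (h2 : 1 - b + a < 1)
    (hβ : β ≤ b - a) (hα : α ≤ 1) :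
    CompletelyMonotoneOn
      (fun x => (x + a) ^ α * (digamma (x + b) - digamma (x + a) - β / (x + a)))
      (Set.Ioi (-a)) := by
  set δ := b - a with hδdef
  have hδ0 : 0 < δ := by rw [hδdef]; linarith
  have hδ1 : δ ≤ 1 := by rw [hδdef]; linarith
  have hβδ : β ≤ δ := hβ
  apply completelyMonotoneOn_of_seq (seqProd (rpowSeq a α) (Gseq δ β a))
  · intro x hx
    have hxa : 0 < x + a := by simpa [neg_lt_iff_pos_add] using hx
    rw [seqProd_zero, rpowSeq, Gseq]
    simp only [Finset.range_zero, Finset.prod_empty, one_mul, pow_zero, Nat.cast_zero,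
      CharP.cast_eq_zero, zero_mul, sub_zero]
    rw [Hf_zero_repr hδ0 hδ1 hxa]
    have hxb : x + b = x + a + δ := by rw [hδdef]; ring
    rw [hxb]
    have hrpow : (x + a) ^ α = (x + a) ^ (α - 1) * (x + a) := by
      rw [show α = (α - 1) + 1 by ring, Real.rpow_add_one hxa.ne' (α - 1)]
      ring_nf
    rw [hrpow]
    ring
  · intro n x hx
    exact seqProd_hasDerivAt (fun n x hx => rpowSeq_hasDerivAt n hx)
      (fun n x hx => Gseq_hasDerivAt hδ0 hδ1 hβδ n hx) n hx
  · intro n x hx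
    exact seqProd_sign (fun n x hx => rpowSeq_sign hα n hx)
      (fun n x hx => Gseq_sign hδ0 hδ1 hβδ n hx) n hx
end

section
/- Let a ≥ 0 and b > 0 be real numbers with 0 < 1 - b + a < 1 (equivalently a < b < a + 1), and let β be a real number. Then the function g_β(x) := (x + a)^β · Γ(x + a)/Γ(x + b) is logarithmically completely monotone on (-a, ∞) if and only if β ≤ b - a. -/
open Set Real

open Filter Topology

def LogCompletelyMonotoneOn (f : ℝ → ℝ) (I : Set ℝ) : Prop :=
  (∀ x ∈ I, 0 < f x) ∧
  ContDiffOn ℝ (⊤ : ℕ∞) (fun x => Real.log (f x)) I ∧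
    ∀ (n : ℕ), 1 ≤ n → ∀ x ∈ I,
      0 ≤ (-1 : ℝ) ^ n * iteratedDerivWithin n (fun x => Real.log (f x)) I x

lemma sum_inv_sq_add {d : ℝ} (hd : 0 < d) : Summable (fun m : ℕ => ((d + m) ^ 2)⁻¹) := by
  rw [← summable_nat_add_iff 1]
  have h : Summable (fun m : ℕ => (((m : ℝ) + 1) ^ 2)⁻¹) := by
    have := Real.summable_one_div_nat_pow.2 (le_refl 2)
    rw [← summable_nat_add_iff 1] at this
    simpa [one_div] using this
  apply Summable.of_nonneg_of_le (fun m => by positivity) (fun m => ?_) h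
  have h1 : ((m : ℝ) + 1) ≤ d + (m + 1 : ℕ) := by push_cast; linarith
  have h2 : (0:ℝ) < (m:ℝ) + 1 := by positivity
  gcongr

lemma pow_sub_pow_le' {t s : ℝ} (h0 : 0 ≤ t) (hts : t ≤ s) (n : ℕ) :
    s ^ n - t ^ n ≤ n * s ^ (n - 1) * (s - t) := by
  rw [← geom_sum₂_mul]
  have : (∑ i ∈ Finset.range n, s ^ i * t ^ (n - 1 - i)) ≤ n * s ^ (n - 1) := by
    calc (∑ i ∈ Finset.range n, s ^ i * t ^ (n - 1 - i))
        ≤ ∑ i ∈ Finset.range n, s ^ (n-1) := by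
          apply Finset.sum_le_sum
          intro i hi
          rw [Finset.mem_range] at hi
          have hs0 : 0 ≤ s := h0.trans hts
          calc s ^ i * t ^ (n - 1 - i) ≤ s ^ i * s ^ (n - 1 - i) :=
                mul_le_mul_of_nonneg_left (pow_le_pow_left₀ h0 hts _) (pow_nonneg hs0 _)
            _ = s ^ (n - 1) := by rw [← pow_add]; congr 1; omega
      _ = n * s ^ (n-1) := by simp [Finset.sum_const, mul_comm]
  have hs : 0 ≤ s - t := sub_nonneg.2 hts
  have hs0 : 0 ≤ s := h0.trans hts
  have hsum : 0 ≤ (∑ i ∈ Finset.range n, s ^ i * t ^ (n - 1 - i)) := by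
    apply Finset.sum_nonneg; intro i _; exact mul_nonneg (pow_nonneg hs0 _) (pow_nonneg h0 _)
  nlinarith

lemma zpow_term_nonneg {d e : ℝ} (h0 : 0 < d) (h2 : d ≤ e) (n : ℕ) (m : ℕ) :
    0 ≤ (d + m) ^ (-(n:ℤ)) - (e + m) ^ (-(n:ℤ)) := by
  have hp : (0:ℝ) < d + m := by positivity
  have hq : (0:ℝ) < e + m := by linarith
  rw [zpow_neg, zpow_neg, zpow_natCast, zpow_natCast, sub_nonneg]
  gcongr


lemma zpow_term_bound {d₀ d e : ℝ} (h0 : 0 < d₀) (h1 : d₀ ≤ d) (h2 : d ≤ e) (n : ℕ) (m : ℕ) :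
    (d + m) ^ (-(n:ℤ)) - (e + m) ^ (-(n:ℤ)) ≤ (n * (e - d) / d₀ ^ (n-1)) * ((d₀ + m) ^ 2)⁻¹ := by
  have hd0 : (0:ℝ) < d₀ + m := by positivity
  have hp : (0:ℝ) < d + m := by linarith
  have hq : (0:ℝ) < e + m := by linarith
  rw [zpow_neg, zpow_neg, zpow_natCast, zpow_natCast, ← inv_pow, ← inv_pow]
  have key : (e + m)⁻¹ ≤ (d + m)⁻¹ := by gcongr
  calc ((d+m)⁻¹)^n - ((e+m)⁻¹)^n
      ≤ n * ((d+m)⁻¹) ^ (n-1) * ((d+m)⁻¹ - (e+m)⁻¹) :=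
        pow_sub_pow_le' (by positivity) key n
    _ ≤ n * (d₀⁻¹) ^ (n-1) * ((e - d) * ((d₀ + m)^2)⁻¹) := by
        have heq : (d+m)⁻¹ - (e+m)⁻¹ = (e - d) / ((d+m)*(e+m)) := by
          rw [inv_sub_inv hp.ne' hq.ne']
          congr 1
          ring
        have hle : (d+m)⁻¹ - (e+m)⁻¹ ≤ (e - d) * ((d₀ + m)^2)⁻¹ := by
          rw [heq, sq, ← div_eq_mul_inv]
          gcongr <;> linarith
        have h1' : (d+m)⁻¹ ≤ d₀⁻¹ := by gcongr; linarith
        exact mul_le_mul (by gcongr) hle (sub_nonneg.2 key) (by positivity)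
    _ = (n * (e - d) / d₀ ^ (n-1)) * ((d₀ + m) ^ 2)⁻¹ := by
        rw [inv_pow, div_eq_mul_inv]
        ring

lemma summable_zpow_diff {d e : ℝ} (h0 : 0 < d) (h2 : d ≤ e) (n : ℕ) :
    Summable (fun m : ℕ => (d + m) ^ (-(n:ℤ)) - (e + m) ^ (-(n:ℤ))) :=
  Summable.of_nonneg_of_le (fun m => zpow_term_nonneg h0 h2 n m)
    (fun m => zpow_term_bound h0 (le_refl d) h2 n m)
    (((sum_inv_sq_add h0).mul_left _))

noncomputable def Gser (a b : ℝ) (n : ℕ) (x : ℝ) : ℝ :=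
  ∑' m : ℕ, ((x + a + m) ^ (-(n:ℤ)) - (x + b + m) ^ (-(n:ℤ)))

noncomputable def Lser (a b : ℝ) (x : ℝ) : ℝ :=
  ∑' m : ℕ, (Real.log (x + b + m) - Real.log (x + a + m)
    - (b - a) * (Real.log (m + 2) - Real.log (m + 1)))

lemma hasDerivAt_zpow_shift {c y : ℝ} (h : y + c ≠ 0) (k : ℤ) :
    HasDerivAt (fun z => (z + c) ^ k) ((k:ℝ) * (y + c) ^ (k - 1)) y := by
  have := (hasDerivAt_zpow k (y + c) (Or.inl h)).comp y ((hasDerivAt_id y).add_const c)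
  simpa [Function.comp_def] using this

lemma summable_Gser_terms {a b x : ℝ} (hab : a ≤ b) (hx : -a < x) (n : ℕ) :
    Summable (fun m : ℕ => (x + a + m) ^ (-(n:ℤ)) - (x + b + m) ^ (-(n:ℤ))) :=
  summable_zpow_diff (by linarith) (by linarith) n

lemma hasDerivAt_Gser {a b : ℝ} (hab : a ≤ b) (n : ℕ) {x : ℝ} (hx : -a < x) :
    HasDerivAt (Gser a b n) (-(n:ℝ) * Gser a b (n+1) x) x := by
  set x₁ : ℝ := (x - a) / 2 with hx₁
  have hδ : (0:ℝ) < x₁ + a := by simp only [hx₁]; linarith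
  have key : HasDerivAt (fun z => ∑' m : ℕ,
      ((z + a + m) ^ (-(n:ℤ)) - (z + b + m) ^ (-(n:ℤ))))
      (∑' m : ℕ, (-(n:ℝ)) * ((x + a + m) ^ (-((n+1:ℕ):ℤ)) - (x + b + m) ^ (-((n+1:ℕ):ℤ)))) x := by
    apply hasDerivAt_tsum_of_isPreconnected
      (u := fun m : ℕ => (n : ℝ) * ((n+1) * (b - a) / (x₁ + a) ^ n) * ((x₁ + a + m) ^ 2)⁻¹)
      (t := Ioi x₁) (y₀ := x)
      (g' := fun m y => (-(n:ℝ)) * ((y + a + m) ^ (-((n+1:ℕ):ℤ)) - (y + b + m) ^ (-((n+1:ℕ):ℤ))))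
    · exact ((sum_inv_sq_add hδ).mul_left _)
    · exact isOpen_Ioi
    · exact isPreconnected_Ioi
    · intro m y hy
      rw [mem_Ioi] at hy
      have ha' : y + a + m > 0 := by push_cast; linarith [Nat.cast_nonneg (α := ℝ) m]
      have hb' : y + b + m > 0 := by linarith
      have d1 : HasDerivAt (fun z => (z + a + m) ^ (-(n:ℤ)))
          ((-(n:ℤ) : ℝ) * (y + a + m) ^ (-(n:ℤ) - 1)) y := by
        have := hasDerivAt_zpow_shift (c := a + m) (y := y) (by push_cast; linarith) (-(n:ℤ))
        simpa [← add_assoc] using this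
      have d2 : HasDerivAt (fun z => (z + b + m) ^ (-(n:ℤ)))
          ((-(n:ℤ) : ℝ) * (y + b + m) ^ (-(n:ℤ) - 1)) y := by
        have := hasDerivAt_zpow_shift (c := b + m) (y := y) (by push_cast; linarith) (-(n:ℤ))
        simpa [← add_assoc] using this
      have hcast : (-(n:ℤ) - 1) = (-((n+1:ℕ):ℤ)) := by push_cast; ring
      convert d1.sub d2 using 1
      · rfl
      rw [hcast]
      push_cast
      ring
    · intro m y hy
      rw [mem_Ioi] at hy
      have h1 : x₁ + a ≤ y + a := by linarith
      have h2 : y + a ≤ y + b := by linarith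
      have hnn := zpow_term_nonneg (d := y + a) (e := y + b) (by linarith) h2 (n+1) m
      have hb := zpow_term_bound (d₀ := x₁ + a) hδ h1 h2 (n+1) m
      simp only [Nat.add_sub_cancel] at hb
      rw [show y + b - (y + a) = b - a by ring] at hb
      push_cast at hb
      rw [norm_eq_abs, abs_mul, abs_neg, Nat.abs_cast, abs_of_nonneg hnn, mul_assoc]
      exact mul_le_mul_of_nonneg_left hb (Nat.cast_nonneg n)
    · exact mem_Ioi.2 (by simp only [hx₁]; linarith)
    · exact summable_Gser_terms hab hx n
    · exact mem_Ioi.2 (by simp only [hx₁]; linarith)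
  have e1 : Gser a b n = fun z => ∑' m : ℕ,
      ((z + a + m) ^ (-(n:ℤ)) - (z + b + m) ^ (-(n:ℤ))) := rfl
  rw [e1]
  convert key using 1
  rw [tsum_mul_left]
  rfl

lemma log_one_add_le {t : ℝ} (ht : 0 ≤ t) : Real.log (1 + t) ≤ t := by
  have := Real.log_le_sub_one_of_pos (x := 1 + t) (by linarith)
  linarith

lemma le_log_one_add {t : ℝ} (ht : 0 ≤ t) : t - t ^ 2 ≤ Real.log (1 + t) := by
  have h1t : (0:ℝ) < 1 + t := by linarith
  have h := Real.log_le_sub_one_of_pos (x := (1 + t)⁻¹) (by positivity)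
  rw [Real.log_inv] at h
  have hinv : (1 + t)⁻¹ * (1 + t) = 1 := inv_mul_cancel₀ h1t.ne'
  nlinarith [sq_nonneg t, mul_nonneg (mul_nonneg ht ht) ht]

lemma summable_log_terms {a b x : ℝ} (hab : a ≤ b) (hx : -a < x) :
    Summable (fun m : ℕ => Real.log (x + b + m) - Real.log (x + a + m)
      - (b - a) * (Real.log (m + 2) - Real.log (m + 1))) := by
  set c := b - a with hc
  set d := x + a with hd
  have hd0 : 0 < d := by simp only [hd]; linarith
  have hc0 : 0 ≤ c := by simp only [hc]; linarith
  set θ := min d 1 with hθ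
  have hθ0 : 0 < θ := lt_min hd0 one_pos
  apply Summable.of_abs
  refine Summable.of_nonneg_of_le (fun m => abs_nonneg _) (fun m => ?_)
    (((sum_inv_sq_add hd0).mul_left (c^2)).add
      ((sum_inv_sq_add one_pos).mul_left (c * |1 - d| / θ + c)))
  have hm1 : (0:ℝ) < (m:ℝ) + 1 := by positivity
  have hp : (0:ℝ) < d + m := by have := Nat.cast_nonneg (α := ℝ) m; linarith
  set s := c / (d + m) with hs
  set r := 1 / ((m:ℝ) + 1) with hr
  have hs0 : 0 ≤ s := div_nonneg hc0 hp.le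
  have hr0 : 0 ≤ r := by positivity
  have e1 : Real.log (x + b + m) - Real.log (x + a + m) = Real.log (1 + s) := by
    have hxb : x + b + m = (d + m) * (1 + s) := by
      rw [hs, mul_add, mul_one, mul_div_cancel₀ _ hp.ne', hd, hc]
      ring
    rw [hxb, Real.log_mul hp.ne' (by nlinarith), hd]
    ring
  have e2 : Real.log ((m:ℝ) + 2) - Real.log ((m:ℝ) + 1) = Real.log (1 + r) := by
    have hm2 : (m:ℝ) + 2 = ((m:ℝ) + 1) * (1 + r) := by
      rw [hr, mul_add, mul_one, mul_one_div_cancel hm1.ne']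
      ring
    rw [hm2, Real.log_mul hm1.ne' (by positivity)]
    ring
  rw [e1, e2]
  have F1s := log_one_add_le hs0
  have F2s := le_log_one_add hs0
  have F1r := log_one_add_le hr0
  have F2r := le_log_one_add hr0
  have hcr1 : c * (r - r^2) ≤ c * Real.log (1 + r) := mul_le_mul_of_nonneg_left F2r hc0
  have hcr2 : c * Real.log (1 + r) ≤ c * r := mul_le_mul_of_nonneg_left F1r hc0
  have hscr : |s - c * r| ≤ (c * |1 - d| / θ) * ((1 + (m:ℝ)) ^ 2)⁻¹ := by
    have eq1 : s - c * r = c * (1 - d) / ((d + m) * ((m:ℝ) + 1)) := by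
      rw [hs, hr, mul_one_div, div_sub_div _ _ hp.ne' hm1.ne']
      congr 1
      ring
    have e3 : (c * |1 - d| / θ) * ((1 + (m:ℝ)) ^ 2)⁻¹
        = (c * |1 - d|) / (θ * (1 + (m:ℝ)) ^ 2) := by
      rw [div_mul_eq_mul_div, mul_comm θ, ← div_div, div_eq_mul_inv (c * |1 - d|)]
    rw [eq1, abs_div, abs_mul, abs_of_nonneg hc0,
      abs_of_pos (mul_pos hp hm1), e3]
    apply div_le_div_of_nonneg_left (mul_nonneg hc0 (abs_nonneg _)) (mul_pos hθ0 (by positivity))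
    have h1 : θ * (1 + (m:ℝ)) ≤ d + m := by
      have ht1 := min_le_left d 1
      have ht2 := min_le_right d 1
      nlinarith [Nat.cast_nonneg (α := ℝ) m]
    nlinarith [Nat.cast_nonneg (α := ℝ) m]
  have hs2 : s ^ 2 = c ^ 2 * ((d + m) ^ 2)⁻¹ := by
    rw [hs, div_pow, div_eq_mul_inv]
  have hr2 : r ^ 2 = ((1 + (m:ℝ)) ^ 2)⁻¹ := by
    rw [hr, div_pow, one_pow, one_div]
    ring_nf
  have hX := abs_le.mp hscr
  have hpos1 : 0 ≤ c ^ 2 * ((d + m) ^ 2)⁻¹ := mul_nonneg (sq_nonneg c) (inv_nonneg.2 (sq_nonneg _))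
  have hpos2 : 0 ≤ c * ((1 + (m:ℝ)) ^ 2)⁻¹ := mul_nonneg hc0 (inv_nonneg.2 (sq_nonneg _))
  have hcr3 : c * r ^ 2 = c * ((1 + (m:ℝ)) ^ 2)⁻¹ := by rw [hr2]
  have hexp : (c * |1 - d| / θ + c) * ((1 + (m:ℝ)) ^ 2)⁻¹
      = (c * |1 - d| / θ) * ((1 + (m:ℝ)) ^ 2)⁻¹ + c * ((1 + (m:ℝ)) ^ 2)⁻¹ := add_mul _ _ _
  have hexp2 : c * (r - r ^ 2) = c * r - c * r ^ 2 := by ring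
  clear_value c d θ s r
  rw [abs_le]
  constructor
  · linarith [hX.1, F2s, hcr2, hs2, hcr3, hpos2]
  · linarith [hX.2, F1s, hcr1, hcr3, hpos1]

lemma hasDerivAt_log_shift {c y : ℝ} (h : 0 < y + c) :
    HasDerivAt (fun z => Real.log (z + c)) ((y + c)⁻¹) y := by
  have := (Real.hasDerivAt_log h.ne').comp y ((hasDerivAt_id y).add_const c)
  simpa [Function.comp_def] using this

lemma hasDerivAt_Lser {a b : ℝ} (hab : a ≤ b) {x : ℝ} (hx : -a < x) :
    HasDerivAt (Lser a b) (-Gser a b 1 x) x := by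
  set x₁ : ℝ := (x - a) / 2 with hx₁
  have hδ : (0:ℝ) < x₁ + a := by simp only [hx₁]; linarith
  have key : HasDerivAt (fun z => ∑' m : ℕ, (Real.log (z + b + m) - Real.log (z + a + m)
      - (b - a) * (Real.log (m + 2) - Real.log (m + 1))))
      (∑' m : ℕ, (-((x + a + m) ^ (-(1:ℤ)) - (x + b + m) ^ (-(1:ℤ))))) x := by
    apply hasDerivAt_tsum_of_isPreconnected
      (u := fun m : ℕ => ((1:ℕ) * (b - a) / (x₁ + a) ^ (1-1)) * ((x₁ + a + m) ^ 2)⁻¹)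
      (t := Ioi x₁) (y₀ := x)
      (g' := fun m y => -((y + a + m) ^ (-(1:ℤ)) - (y + b + m) ^ (-(1:ℤ))))
    · exact ((sum_inv_sq_add hδ).mul_left _)
    · exact isOpen_Ioi
    · exact isPreconnected_Ioi
    · intro m y hy
      rw [mem_Ioi] at hy
      have ha' : (0:ℝ) < y + a + m := by
        have := Nat.cast_nonneg (α := ℝ) m; linarith
      have hb' : (0:ℝ) < y + b + m := by linarith
      have d1 : HasDerivAt (fun z => Real.log (z + a + m)) ((y + a + m)⁻¹) y := by
        have := hasDerivAt_log_shift (c := a + m) (y := y) (by push_cast at ha' ⊢; linarith)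
        simpa [← add_assoc] using this
      have d2 : HasDerivAt (fun z => Real.log (z + b + m)) ((y + b + m)⁻¹) y := by
        have := hasDerivAt_log_shift (c := b + m) (y := y) (by push_cast at hb' ⊢; linarith)
        simpa [← add_assoc] using this
      have := (d2.sub d1).sub_const ((b - a) * (Real.log (m + 2) - Real.log (m + 1)))
      convert this using 1
      · rfl
      rw [zpow_neg_one, zpow_neg_one]
      ring
    · intro m y hy
      rw [mem_Ioi] at hy
      have h1 : x₁ + a ≤ y + a := by linarith
      have h2 : y + a ≤ y + b := by linarith
      have hnn := zpow_term_nonneg (d := y + a) (e := y + b) (by linarith) h2 1 m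
      have hb2 := zpow_term_bound (d₀ := x₁ + a) hδ h1 h2 1 m
      rw [show y + b - (y + a) = b - a by ring] at hb2
      rw [norm_eq_abs, abs_neg, abs_of_nonneg]
      · convert hb2 using 3 <;> norm_num
      · simpa using hnn
    · exact mem_Ioi.2 (by simp only [hx₁]; linarith)
    · exact summable_log_terms hab hx
    · exact mem_Ioi.2 (by simp only [hx₁]; linarith)
  have e1 : Lser a b = fun z => ∑' m : ℕ, (Real.log (z + b + m) - Real.log (z + a + m)
      - (b - a) * (Real.log (m + 2) - Real.log (m + 1))) := rfl
  rw [e1]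
  convert key using 1
  rw [tsum_neg]
  rfl

lemma Lser_eq {a b x : ℝ} (hab : a ≤ b) (hx : -a < x) :
    Lser a b x = Real.log (Real.Gamma (x + a)) - Real.log (Real.Gamma (x + b)) := by
  have hxa : 0 < x + a := by linarith
  have hxb : 0 < x + b := by linarith
  have hs := (summable_log_terms hab hx).hasSum.tendsto_sum_nat
  have h1 : Tendsto (fun n : ℕ => ∑ m ∈ Finset.range (n + 1),
      (Real.log (x + b + m) - Real.log (x + a + m)
        - (b - a) * (Real.log (m + 2) - Real.log (m + 1)))) atTop (𝓝 (Lser a b x)) :=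
    hs.comp (tendsto_add_atTop_nat 1)
  have h2 := Real.BohrMollerup.tendsto_log_gamma hxa
  have h3 := Real.BohrMollerup.tendsto_log_gamma hxb
  have h4 := h2.sub h3
  have tele : ∀ n : ℕ, ∑ m ∈ Finset.range (n + 1),
      (Real.log ((m:ℝ) + 2) - Real.log ((m:ℝ) + 1)) = Real.log ((n:ℝ) + 2) := by
    intro n
    induction n with
    | zero => norm_num
    | succ k ih =>
        rw [Finset.sum_range_succ, ih]
        push_cast
        ring
  have key : ∀ n : ℕ, Real.BohrMollerup.logGammaSeq (x + a) n
      - Real.BohrMollerup.logGammaSeq (x + b) n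
      = (∑ m ∈ Finset.range (n + 1), (Real.log (x + b + m) - Real.log (x + a + m)
          - (b - a) * (Real.log (m + 2) - Real.log (m + 1))))
        + (b - a) * Real.log ((n:ℝ) + 2) - (b - a) * Real.log n := by
    intro n
    simp only [Real.BohrMollerup.logGammaSeq]
    rw [Finset.sum_sub_distrib, ← Finset.mul_sum, tele n, Finset.sum_sub_distrib]
    ring
  have h5 : Tendsto (fun n : ℕ => (b - a) * Real.log ((n:ℝ) + 2) - (b - a) * Real.log n)
      atTop (𝓝 0) := by
    have t1 := Real.tendsto_log_nat_add_one_sub_log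
    have t2 := Real.tendsto_log_nat_add_one_sub_log.comp (tendsto_add_atTop_nat 1)
    have t3 : Tendsto (fun n : ℕ => Real.log ((n:ℝ) + 2) - Real.log n) atTop (𝓝 0) := by
      have := t2.add t1
      rw [add_zero] at this
      convert this using 2 with n
      simp only [Function.comp_apply]
      push_cast
      ring
    have := t3.const_mul (b - a)
    rw [mul_zero] at this
    convert this using 2 with n
    ring
  have h6 : Tendsto (fun n : ℕ => Real.BohrMollerup.logGammaSeq (x + a) n
      - Real.BohrMollerup.logGammaSeq (x + b) n) atTop
      (𝓝 (Lser a b x + 0)) := by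
    simp only [key]
    exact (h1.add h5).congr (fun n => by ring)
  rw [add_zero] at h6
  exact tendsto_nhds_unique h6 h4

noncomputable def Dfun (a b β : ℝ) : ℕ → ℝ → ℝ
  | 0 => fun x => β * Real.log (x + a) + Lser a b x
  | (n+1) => fun x => (-1:ℝ)^n * (Nat.factorial n) * (β * (x + a) ^ (-((n+1:ℕ):ℤ)) - Gser a b (n+1) x)

lemma hasDerivAt_Dfun {a b β : ℝ} (hab : a ≤ b) (n : ℕ) {x : ℝ} (hx : -a < x) :
    HasDerivAt (Dfun a b β n) (Dfun a b β (n+1) x) x := by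
  have hxa : 0 < x + a := by linarith
  cases n with
  | zero =>
      have d1 := (hasDerivAt_log_shift (c := a) hxa).const_mul β
      have d2 := hasDerivAt_Lser hab hx
      have := d1.add d2
      convert this using 1
      · rfl
      · rfl
      · rfl
      simp only [Dfun, Nat.factorial_zero]
      rw [show (-((0+1:ℕ):ℤ)) = (-1:ℤ) by norm_num, zpow_neg_one]
      push_cast
      ring
  | succ n =>
      have d1 := (hasDerivAt_zpow_shift (c := a) (y := x) hxa.ne' (-((n+1:ℕ):ℤ))).const_mul β
      have d2 := hasDerivAt_Gser hab (n+1) hx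
      have := (d1.sub d2).const_mul ((-1:ℝ)^n * (Nat.factorial n))
      convert this using 1
      · rfl
      · rfl
      · rfl
      simp only [Dfun, Nat.factorial_succ]
      rw [show (-((n+1:ℕ):ℤ) - 1) = (-((n+2:ℕ):ℤ)) by push_cast; ring]
      push_cast
      ring

lemma Gser_lower {a b x : ℝ} (hab : a ≤ b) (hb1 : b ≤ a + 1) (hx : -a < x) (n : ℕ) (hn : 1 ≤ n) :
    (b - a) * (x + a) ^ (-(n:ℤ)) ≤ Gser a b n x := by
  have hxa : 0 < x + a := by linarith
  set c := b - a with hc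
  have hc0 : 0 ≤ c := by simp only [hc]; linarith
  have hc1 : c ≤ 1 := by simp only [hc]; linarith
  set f : ℕ → ℝ := fun m => (x + a + m) ^ (-(n:ℤ)) with hf
  -- termwise lower bound via convexity
  have hterm : ∀ m : ℕ, c * (f m - f (m + 1)) ≤
      (x + a + m) ^ (-(n:ℤ)) - (x + b + m) ^ (-(n:ℤ)) := by
    intro m
    have hp : (0:ℝ) < x + a + m := by have := Nat.cast_nonneg (α := ℝ) m; linarith
    have hcx := (convexOn_zpow (𝕜 := ℝ) (-(n:ℤ))).2 (mem_Ioi.2 hp)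
      (mem_Ioi.2 (show (0:ℝ) < x + a + m + 1 by linarith))
      (show (0:ℝ) ≤ 1 - c by linarith) hc0 (by ring)
    have hmid : (1 - c) • (x + a + m) + c • (x + a + m + 1) = x + b + m := by
      simp only [smul_eq_mul]; ring
    rw [hmid] at hcx
    simp only [smul_eq_mul] at hcx
    simp only [hf, Nat.cast_add, Nat.cast_one, ← add_assoc]
    linarith
  have hsum := summable_Gser_terms hab hx n
  have hlow : ∀ N : ℕ, c * (f 0 - f N) ≤ Gser a b n x := by
    intro N
    have h1 : ∑ m ∈ Finset.range N, c * (f m - f (m + 1)) ≤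
        ∑ m ∈ Finset.range N, ((x + a + m) ^ (-(n:ℤ)) - (x + b + m) ^ (-(n:ℤ))) :=
      Finset.sum_le_sum fun m _ => hterm m
    have h2 : ∑ m ∈ Finset.range N, ((x + a + m) ^ (-(n:ℤ)) - (x + b + m) ^ (-(n:ℤ)))
        ≤ Gser a b n x :=
      Summable.sum_le_tsum _ (fun m _ => zpow_term_nonneg (by linarith) (by linarith) n m) hsum
    have h3 : ∑ m ∈ Finset.range N, c * (f m - f (m + 1)) = c * (f 0 - f N) := by
      rw [← Finset.mul_sum, Finset.sum_range_sub' f]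
    linarith
  have hf0 : f 0 = (x + a) ^ (-(n:ℤ)) := by simp [hf]
  have hft : Tendsto (fun N : ℕ => f N) atTop (𝓝 0) := by
    apply Tendsto.comp (tendsto_zpow_atTop_zero (by omega : -(n:ℤ) < 0))
    apply tendsto_atTop_add_const_left
    exact tendsto_natCast_atTop_atTop
  have hlim : Tendsto (fun N : ℕ => c * (f 0 - f N)) atTop (𝓝 (c * (f 0 - 0))) :=
    (tendsto_const_nhds.sub hft).const_mul c
  rw [sub_zero] at hlim
  have hfin := le_of_tendsto hlim (Filter.Eventually.of_forall hlow)
  rwa [hf0] at hfin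

lemma Gser_one_upper {a b x : ℝ} (hab : a ≤ b) (hx : -a < x) :
    Gser a b 1 x ≤ (b - a) * (((x + a) ^ 2)⁻¹ + (x + a)⁻¹) := by
  have hd0 : (0:ℝ) < x + a := by linarith
  have hbd : ∀ m : ℕ, (x + a + m) ^ (-(1:ℤ)) - (x + b + m) ^ (-(1:ℤ))
      ≤ (b - a) * (((x + a) + m) ^ 2)⁻¹ := by
    intro m
    have := zpow_term_bound (d₀ := x + a) hd0 (le_refl _) (show x + a ≤ x + b by linarith) 1 m
    simpa using this
  have hsum1 := summable_Gser_terms hab hx 1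
  have hsum2 := (sum_inv_sq_add hd0).mul_left (b - a)
  have hGle : Gser a b 1 x ≤ (b - a) * ∑' m : ℕ, (((x + a) + m) ^ 2)⁻¹ := by
    rw [← tsum_mul_left]
    exact Summable.tsum_le_tsum (fun m => by simpa using hbd m) (by simpa using hsum1) hsum2
  have hA : (∑' m : ℕ, (((x + a) + m) ^ 2)⁻¹) ≤ ((x + a) ^ 2)⁻¹ + (x + a)⁻¹ := by
    rw [Summable.tsum_eq_zero_add (sum_inv_sq_add hd0)]
    have h0 : (((x + a) + (0:ℕ)) ^ 2)⁻¹ = ((x + a) ^ 2)⁻¹ := by norm_num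
    rw [h0]
    have htail : (∑' m : ℕ, (((x + a) + (m + 1 : ℕ)) ^ 2)⁻¹) ≤ (x + a)⁻¹ := by
      apply Real.tsum_le_of_sum_range_le (fun m => by positivity)
      intro N
      set g : ℕ → ℝ := fun m => ((x + a) + m)⁻¹ with hg
      have hterm : ∀ m : ℕ, (((x + a) + (m + 1 : ℕ)) ^ 2)⁻¹ ≤ g m - g (m + 1) := by
        intro m
        have hp : (0:ℝ) < x + a + m := by have := Nat.cast_nonneg (α := ℝ) m; linarith
        have hq : (0:ℝ) < x + a + m + 1 := by linarith
        have he : g m - g (m + 1) = ((x + a + m) * (x + a + m + 1))⁻¹ := by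
          simp only [hg, Nat.cast_add, Nat.cast_one, ← add_assoc]
          rw [inv_sub_inv hp.ne' hq.ne']
          rw [show x + a + ↑m + 1 - (x + a + ↑m) = 1 by ring, one_div]
        rw [he]
        have hcast : ((x + a) + ((m + 1 : ℕ) : ℝ)) ^ 2 = (x + a + m + 1) ^ 2 := by
          push_cast; ring
        rw [hcast]
        apply inv_anti₀ (by positivity)
        nlinarith
      calc ∑ m ∈ Finset.range N, (((x + a) + (m + 1 : ℕ)) ^ 2)⁻¹
          ≤ ∑ m ∈ Finset.range N, (g m - g (m + 1)) := Finset.sum_le_sum fun m _ => hterm m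
        _ = g 0 - g N := Finset.sum_range_sub' g N
        _ ≤ (x + a)⁻¹ := by
            have hN : (0:ℝ) < x + a + N := by have := Nat.cast_nonneg (α := ℝ) N; linarith
            have : 0 ≤ g N := by simp only [hg]; positivity
            have hg0 : g 0 = (x + a)⁻¹ := by simp [hg]
            linarith
    linarith
  calc Gser a b 1 x ≤ (b - a) * ∑' m : ℕ, (((x + a) + m) ^ 2)⁻¹ := hGle
    _ ≤ (b - a) * (((x + a) ^ 2)⁻¹ + (x + a)⁻¹) := by
        apply mul_le_mul_of_nonneg_left hA (by linarith)

lemma iteratedDerivWithin_of_isOpen'' {f : ℝ → ℝ} {s : Set ℝ} (hs : IsOpen s) {x : ℝ}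
    (hx : x ∈ s) (n : ℕ) : iteratedDerivWithin n f s x = iteratedDeriv n f x := by
  simp only [iteratedDerivWithin, iteratedDeriv]
  rw [iteratedFDerivWithin_of_isOpen n hs hx]

lemma iteratedDeriv_Dfun {a b β : ℝ} (hab : a ≤ b) (n : ℕ) :
    Set.EqOn (iteratedDeriv n (Dfun a b β 0)) (Dfun a b β n) (Ioi (-a)) := by
  induction n with
  | zero => intro x hx; simp [iteratedDeriv_zero]
  | succ n ih =>
      intro x hx
      rw [iteratedDeriv_succ]
      have hev : iteratedDeriv n (Dfun a b β 0) =ᶠ[𝓝 x] Dfun a b β n :=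
        Filter.eventuallyEq_of_mem (isOpen_Ioi.mem_nhds hx) ih
      rw [hev.deriv_eq]
      exact (hasDerivAt_Dfun hab n hx).deriv

lemma contDiffOn_Dfun {a b β : ℝ} (hab : a ≤ b) (N : ℕ) :
    ∀ k : ℕ, ContDiffOn ℝ N (Dfun a b β k) (Ioi (-a)) := by
  induction N with
  | zero =>
      intro k
      simp only [Nat.cast_zero, contDiffOn_zero]
      intro x hx
      exact (hasDerivAt_Dfun hab k hx).continuousAt.continuousWithinAt
  | succ N ih =>
      intro k
      rw [show ((N + 1 : ℕ) : WithTop ℕ∞) = (N : WithTop ℕ∞) + 1 by push_cast; rfl]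
      rw [contDiffOn_succ_iff_deriv_of_isOpen isOpen_Ioi]
      refine ⟨fun x hx => (hasDerivAt_Dfun hab k hx).differentiableAt.differentiableWithinAt,
        ?_, ?_⟩
      · intro h; exact absurd h (by simp)
      · exact (ih (k + 1)).congr fun x hx => (hasDerivAt_Dfun hab k hx).deriv

theorem gamma_ratio_rpow_log_completely_monotone_iff (a b β : ℝ)
    (ha : 0 ≤ a) (hb : 0 < b) (h1 : 0 < 1 - b + a) (h2 : 1 - b + a < 1) :
    LogCompletelyMonotoneOn
      (fun x => (x + a) ^ β * Real.Gamma (x + a) / Real.Gamma (x + b))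
      (Set.Ioi (-a)) ↔ β ≤ b - a := by
  have hc0 : 0 < b - a := by linarith
  have hc1 : b - a < 1 := by linarith
  have hab : a ≤ b := by linarith
  have hEq : Set.EqOn (fun x => Real.log ((x + a) ^ β * Real.Gamma (x + a) / Real.Gamma (x + b)))
      (Dfun a b β 0) (Set.Ioi (-a)) := by
    intro x hx
    rw [mem_Ioi] at hx
    have hxa : 0 < x + a := by linarith
    have hxb : 0 < x + b := by linarith
    have hga := Real.Gamma_pos_of_pos hxa
    have hgb := Real.Gamma_pos_of_pos hxb
    have hrp : (0:ℝ) < (x + a) ^ β := Real.rpow_pos_of_pos hxa β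
    simp only
    rw [Real.log_div (by positivity) hgb.ne', Real.log_mul hrp.ne' hga.ne', Real.log_rpow hxa]
    simp only [Dfun]
    rw [Lser_eq hab hx]
    ring
  have hiter : ∀ (n : ℕ) (x : ℝ), x ∈ Ioi (-a) →
      iteratedDerivWithin n
        (fun x => Real.log ((x + a) ^ β * Real.Gamma (x + a) / Real.Gamma (x + b)))
        (Ioi (-a)) x = Dfun a b β n x := by
    intro n x hx
    rw [iteratedDerivWithin_of_isOpen'' isOpen_Ioi hx n,
      hEq.iteratedDeriv_of_isOpen isOpen_Ioi n hx, iteratedDeriv_Dfun hab n hx]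
  constructor
  · rintro ⟨hpos, hsmooth, hineq⟩
    by_contra hβ
    push_neg at hβ
    have hβc : 0 < β - (b - a) := by linarith
    set t : ℝ := (b - a) / (β - (b - a)) + 1 with ht
    have ht0 : 0 < t := by positivity
    set x := -a + t with hxdef
    have hx : x ∈ Ioi (-a) := by simp only [hxdef, mem_Ioi]; linarith
    have h1' := hineq 1 le_rfl x hx
    rw [hiter 1 x hx] at h1'
    simp only [Dfun, pow_zero, Nat.factorial_zero, Nat.cast_one, one_mul, pow_one] at h1'
    have hxa : x + a = t := by simp only [hxdef]; ring
    have hzp : (x + a) ^ (-((0+1:ℕ):ℤ)) = t⁻¹ := by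
      rw [hxa]; norm_num
    rw [hzp] at h1'
    -- h1' : 0 ≤ -1 * (β * t⁻¹ - Gser a b 1 x), so β * t⁻¹ ≤ Gser a b 1 x
    have hlow : β * t⁻¹ ≤ Gser a b 1 x := by linarith
    have hup := Gser_one_upper hab (mem_Ioi.1 hx)
    rw [hxa] at hup
    have hmul := mul_le_mul_of_nonneg_right (hlow.trans hup) (sq_nonneg t)
    have e1 : β * t⁻¹ * t ^ 2 = β * t := by field_simp
    have e2 : (b - a) * ((t ^ 2)⁻¹ + t⁻¹) * t ^ 2 = (b - a) + (b - a) * t := by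
      field_simp
    rw [e1, e2] at hmul
    have e3 : (β - (b - a)) * t = (b - a) + (β - (b - a)) := by
      rw [ht, mul_add, mul_one, mul_div_cancel₀ _ hβc.ne']
    have e4 : β * t = (b - a) * t + (β - (b - a)) * t := by ring
    linarith
  · intro hβ
    refine ⟨?_, ?_, ?_⟩
    · intro x hx
      rw [mem_Ioi] at hx
      have hxa : 0 < x + a := by linarith
      have hxb : 0 < x + b := by linarith
      exact div_pos (mul_pos (Real.rpow_pos_of_pos hxa β) (Real.Gamma_pos_of_pos hxa))
        (Real.Gamma_pos_of_pos hxb)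
    · have hD : ContDiffOn ℝ (⊤ : ℕ∞) (Dfun a b β 0) (Ioi (-a)) := by
        apply contDiffOn_infty.2
        exact fun n => contDiffOn_Dfun hab n 0
      exact hD.congr hEq
    · beta_reduce
      intro n hn x hx
      rw [hiter n x hx]
      obtain ⟨k, rfl⟩ : ∃ k, n = k + 1 := ⟨n - 1, by omega⟩
      have hxa : 0 < x + a := by rw [mem_Ioi] at hx; linarith
      have hz : (0:ℝ) < (x + a) ^ (-((k+1:ℕ):ℤ)) := zpow_pos hxa _
      have hkey : β * (x + a) ^ (-((k+1:ℕ):ℤ)) ≤ Gser a b (k+1) x := by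
        rcases le_or_gt β 0 with hβ0 | hβ0
        · have hGnn : 0 ≤ Gser a b (k+1) x :=
            tsum_nonneg fun m => zpow_term_nonneg (by rw [mem_Ioi] at hx; linarith)
              (by linarith) (k+1) m
          nlinarith
        · calc β * (x + a) ^ (-((k+1:ℕ):ℤ))
              ≤ (b - a) * (x + a) ^ (-((k+1:ℕ):ℤ)) :=
                mul_le_mul_of_nonneg_right hβ hz.le
            _ ≤ Gser a b (k+1) x :=
                Gser_lower hab (by linarith) (mem_Ioi.1 hx) (k+1) (by omega)
      simp only [Dfun]
      have hsq : ((-1:ℝ)^k) * ((-1:ℝ)^k) = 1 := by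
        rw [← pow_add, ← two_mul, pow_mul, neg_one_sq, one_pow]
      have key2 : (-1:ℝ)^(k+1) * ((-1:ℝ)^k * (Nat.factorial k : ℝ) *
          (β * (x + a) ^ (-((k+1:ℕ):ℤ)) - Gser a b (k+1) x))
          = (Nat.factorial k : ℝ) * (Gser a b (k+1) x - β * (x + a) ^ (-((k+1:ℕ):ℤ))) := by
        rw [pow_succ]
        linear_combination (-( (Nat.factorial k : ℝ) *
          (β * (x + a) ^ (-((k+1:ℕ):ℤ)) - Gser a b (k+1) x))) * hsq
      rw [key2]
      exact mul_nonneg (Nat.cast_nonneg _) (by linarith)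
end

section
/- Let a, b > 0 and β be real numbers with 0 < 1 - b + a ≤ 1 (equivalently a ≤ b < a + 1) and β ≤ b - a, let c₀ ≥ a^β Γ(a)/Γ(b), and let g : ℝ → ℝ be completely monotone on (0, ∞). Then the function x ↦ [c₀ Γ(x + b)/((x + a)^β Γ(x + a))]^{g(x)/x} is logarithmically completely monotone on (0, ∞). -/
open Set Real

section CMAuxSection
open Set Real Filter Finset Topology


namespace CMAux

lemma hasDerivAt_inv_pow (n : ℕ) {y : ℝ} (hy : y ≠ 0) :
    HasDerivAt (fun x : ℝ => (x ^ n)⁻¹) (-(n : ℝ) * (y ^ (n + 1))⁻¹) y := by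
  have h := hasDerivAt_zpow (-(n : ℤ)) y (Or.inl hy)
  have hfun : (fun x : ℝ => x ^ (-(n : ℤ))) = fun x : ℝ => (x ^ n)⁻¹ := by
    funext x; rw [zpow_neg, zpow_natCast]
  rw [hfun] at h
  refine h.congr_deriv ?_
  have : -(n : ℤ) - 1 = -((n + 1 : ℕ) : ℤ) := by push_cast; ring
  rw [this, zpow_neg, zpow_natCast]
  push_cast; ring

lemma hasDerivAt_inv_pow_shift (n : ℕ) {c y : ℝ} (hy : y + c ≠ 0) :
    HasDerivAt (fun x : ℝ => ((x + c) ^ n)⁻¹) (-(n : ℝ) * ((y + c) ^ (n + 1))⁻¹) y := by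
  have h := (hasDerivAt_inv_pow n hy).comp y ((hasDerivAt_id y).add_const c)
  rw [Function.comp_def] at h
  exact h.congr_deriv (by simp)

lemma pow_add_sub_pow_le (k : ℕ) {y l : ℝ} (hy : 0 ≤ y) (hl : 0 ≤ l) :
    (y + l) ^ (k + 1) - y ^ (k + 1) ≤ (k + 1 : ℝ) * l * (y + l) ^ k := by
  induction k with
  | zero => simp
  | succ k ih =>
    have hyl : 0 ≤ y + l := by linarith
    have h1 : (y + l) ^ (k + 2) - y ^ (k + 2)
        = (y + l) * ((y + l) ^ (k + 1) - y ^ (k + 1)) + l * y ^ (k + 1) := by ring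
    have h2 : y ^ (k + 1) ≤ (y + l) ^ (k + 1) := by gcongr; linarith
    calc (y + l) ^ (k + 2) - y ^ (k + 2)
        = (y + l) * ((y + l) ^ (k + 1) - y ^ (k + 1)) + l * y ^ (k + 1) := h1
      _ ≤ (y + l) * ((k + 1 : ℝ) * l * (y + l) ^ k) + l * (y + l) ^ (k + 1) := by
          gcongr
      _ = (k + 2 : ℝ) * l * (y + l) ^ (k + 1) := by ring
      _ ≤ ((k + 1 : ℕ) + 1 : ℝ) * l * (y + l) ^ (k + 1) := by push_cast; ring_nf; exact le_rfl

/-- From a chain of derivatives on a set, compute `iteratedDerivWithin`. -/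
lemma chain_iteratedDerivWithin {s : Set ℝ} (hs : UniqueDiffOn ℝ s) {d : ℕ → ℝ → ℝ} {f : ℝ → ℝ}
    (hd : ∀ n, ∀ x ∈ s, HasDerivAt (d n) (d (n + 1) x) x) (hf : EqOn f (d 0) s) :
    ∀ n, EqOn (iteratedDerivWithin n f s) (d n) s := by
  intro n
  induction n with
  | zero => simpa [iteratedDerivWithin_zero] using hf
  | succ n ih =>
    intro x hx
    rw [iteratedDerivWithin_succ, derivWithin_congr ih (ih hx),
      ((hd n x hx).hasDerivWithinAt).derivWithin (hs x hx)]

lemma chain_contDiffOn {s : Set ℝ} (hs : IsOpen s) {d : ℕ → ℝ → ℝ}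
    (hd : ∀ n, ∀ x ∈ s, HasDerivAt (d n) (d (n + 1) x) x) (n : ℕ) :
    ContDiffOn ℝ (⊤ : ℕ∞) (d n) s := by
  have key : ∀ m : ℕ, ∀ k : ℕ, ContDiffOn ℝ (m : WithTop ℕ∞) (d k) s := by
    intro m
    induction m with
    | zero =>
      intro k
      rw [show ((0 : ℕ) : WithTop ℕ∞) = 0 by rfl, contDiffOn_zero]
      exact fun x hx => ((hd k x hx).differentiableAt.continuousAt).continuousWithinAt
    | succ m ih =>
      intro k
      rw [show ((m + 1 : ℕ) : WithTop ℕ∞) = (m : WithTop ℕ∞) + 1 by push_cast; rfl,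
        contDiffOn_succ_iff_derivWithin hs.uniqueDiffOn]
      refine ⟨fun x hx => (hd k x hx).differentiableAt.differentiableWithinAt, by simp, ?_⟩
      exact (ih (k + 1)).congr fun x hx => by
        rw [derivWithin_of_isOpen hs hx, (hd k x hx).deriv]
  rw [show ((⊤ : ℕ∞) : WithTop ℕ∞) = (⊤ : ℕ∞) by rfl, contDiffOn_infty]
  exact fun m => key m n

/-- Leibniz rule chains. -/
lemma chain_mul {s : Set ℝ} {u v : ℕ → ℝ → ℝ}
    (hu : ∀ n, ∀ x ∈ s, HasDerivAt (u n) (u (n + 1) x) x)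
    (hv : ∀ n, ∀ x ∈ s, HasDerivAt (v n) (v (n + 1) x) x) :
    ∀ n, ∀ x ∈ s, HasDerivAt
      (fun y => ∑ k ∈ range (n + 1), (n.choose k : ℝ) * u k y * v (n - k) y)
      (∑ k ∈ range (n + 2), ((n + 1).choose k : ℝ) * u k x * v (n + 1 - k) x) x := by
  intro n x hx
  have h : HasDerivAt (fun y => ∑ k ∈ range (n + 1), (n.choose k : ℝ) * u k y * v (n - k) y)
      (∑ k ∈ range (n + 1), (n.choose k : ℝ) *
        (u (k + 1) x * v (n - k) x + u k x * v (n - k + 1) x)) x := by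
    apply HasDerivAt.fun_sum
    intro k hk
    have := ((hu k x hx).mul (hv (n - k) x hx)).const_mul (n.choose k : ℝ)
    simpa [mul_assoc] using this
  convert h using 1
  have split : ∑ k ∈ range (n + 1), (n.choose k : ℝ) *
        (u (k + 1) x * v (n - k) x + u k x * v (n - k + 1) x)
      = (∑ k ∈ range (n + 1), (n.choose k : ℝ) * u (k + 1) x * v (n - k) x)
        + ∑ k ∈ range (n + 1), (n.choose k : ℝ) * u k x * v (n - k + 1) x := by
    rw [← Finset.sum_add_distrib]; apply Finset.sum_congr rfl; intro k hk; ring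
  rw [split]
  -- LHS : ∑ k ∈ range (n+2), C(n+1,k) u k v (n+1-k)
  rw [Finset.sum_range_succ' (fun k => ((n + 1).choose k : ℝ) * u k x * v (n + 1 - k) x)]
  have e1 : ∀ k ∈ range (n + 1), ((n + 1).choose (k + 1) : ℝ) * u (k + 1) x * v (n + 1 - (k + 1)) x
      = (n.choose k : ℝ) * u (k + 1) x * v (n - k) x
        + (n.choose (k + 1) : ℝ) * u (k + 1) x * v (n - k) x := by
    intro k hk
    rw [Nat.choose_succ_succ]
    have : n + 1 - (k + 1) = n - k := by omega
    rw [this]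
    push_cast; ring
  rw [Finset.sum_congr rfl e1, Finset.sum_add_distrib]
  have e2 : ∑ k ∈ range (n + 1), (n.choose (k + 1) : ℝ) * u (k + 1) x * v (n - k) x
      = ∑ k ∈ range (n + 1), (n.choose k : ℝ) * u k x * v (n - k + 1) x - u 0 x * v (n + 1) x := by
    rw [Finset.sum_range_succ' (fun k => (n.choose k : ℝ) * u k x * v (n - k + 1) x)]
    simp only [Nat.choose_zero_right, Nat.cast_one, Nat.sub_zero, one_mul]
    have : ∀ k ∈ range n, (n.choose (k + 1) : ℝ) * u (k + 1) x * v (n - (k + 1) + 1) x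
        = (n.choose (k + 1) : ℝ) * u (k + 1) x * v (n - k) x := by
      intro k hk
      rw [Finset.mem_range] at hk
      congr 2
      omega
    rw [Finset.sum_congr rfl this, Finset.sum_range_succ]
    simp [Nat.choose_succ_self]
  rw [e2]
  simp only [Nat.choose_zero_right, Nat.cast_one, one_mul, Nat.sub_zero]
  ring


noncomputable def term (a b : ℝ) (n m : ℕ) (x : ℝ) : ℝ :=
  ((x + a + m) ^ n)⁻¹ - ((x + b + m) ^ n)⁻¹

noncomputable def P (a b : ℝ) (n : ℕ) (x : ℝ) : ℝ := ∑' m : ℕ, term a b n m x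

variable {a b : ℝ}



lemma term_nonneg (hab : a ≤ b) {n m : ℕ} {x : ℝ} (hx : 0 < x + a) :
    0 ≤ term a b n m x := by
  have h1 : 0 < x + a + m := by positivity
  have h2 : x + a + m ≤ x + b + m := by linarith
  have := pow_le_pow_left₀ h1.le h2 n
  rw [term, sub_nonneg]
  exact inv_anti₀ (by positivity) this

lemma term_le (hab : a ≤ b) {n m : ℕ} {x r : ℝ} (hr : 0 < r) (hrx : r ≤ x + a) :
    term a b (n + 1) m x ≤ (n + 1 : ℝ) * (b - a) * ((r + m) ^ (n + 2))⁻¹ := by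
  set y := x + a + m with hy
  have hyb : x + b + m = y + (b - a) := by rw [hy]; ring
  have hrm : 0 < r + m := by positivity
  have hry : r + m ≤ y := by rw [hy]; push_cast; linarith
  have hy0 : 0 < y := lt_of_lt_of_le hrm hry
  have hl : 0 ≤ b - a := by linarith
  have hyl : 0 < y + (b - a) := by linarith
  have hA : (0:ℝ) < y ^ (n + 1) := by positivity
  have hB : (0:ℝ) < (y + (b - a)) ^ (n + 1) := by positivity
  rw [term, hyb, inv_sub_inv hA.ne' hB.ne']
  have hnum : (y + (b - a)) ^ (n + 1) - y ^ (n + 1)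
      ≤ (n + 1 : ℝ) * (b - a) * (y + (b - a)) ^ n := pow_add_sub_pow_le n hy0.le hl
  calc ((y + (b - a)) ^ (n + 1) - y ^ (n + 1)) / (y ^ (n + 1) * (y + (b - a)) ^ (n + 1))
      ≤ ((n + 1 : ℝ) * (b - a) * (y + (b - a)) ^ n) / (y ^ (n + 1) * (y + (b - a)) ^ (n + 1)) := by
        gcongr
    _ = (n + 1 : ℝ) * (b - a) / (y ^ (n + 1) * (y + (b - a))) := by
        rw [pow_succ (y + (b - a)) n]
        field_simp
    _ ≤ (n + 1 : ℝ) * (b - a) / ((r + m) ^ (n + 1) * (r + m)) := by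
        apply div_le_div_of_nonneg_left (by positivity) (by positivity)
        have : (r + m) ^ (n + 1) ≤ y ^ (n + 1) := pow_le_pow_left₀ hrm.le hry _
        nlinarith [pow_pos hrm (n+1), pow_pos hy0 (n+1)]
    _ = (n + 1 : ℝ) * (b - a) * ((r + m) ^ (n + 2))⁻¹ := by
        rw [pow_succ (r + m) (n + 1)]
        field_simp

lemma summable_aux {r : ℝ} (hr : 0 < r) (k : ℕ) :
    Summable (fun m : ℕ => ((r + m) ^ (k + 2))⁻¹) := by
  rw [← summable_nat_add_iff 1]
  have hps : Summable (fun n : ℕ => 1 / (n : ℝ) ^ (k + 2)) :=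
    Real.summable_one_div_nat_pow.mpr (by omega)
  have hps' := (summable_nat_add_iff 1).mpr hps
  apply Summable.of_nonneg_of_le (fun m => by positivity) _ hps'
  intro m
  have h1 : ((m : ℝ) + 1) ≤ r + (m + 1 : ℕ) := by push_cast; linarith
  have h2 : (0:ℝ) < (m : ℝ) + 1 := by positivity
  rw [one_div]
  apply inv_anti₀ (by positivity)
  calc ((m + 1 : ℕ) : ℝ) ^ (k + 2) = ((m:ℝ) + 1) ^ (k + 2) := by push_cast; ring
    _ ≤ (r + (m + 1 : ℕ)) ^ (k + 2) := by
        apply pow_le_pow_left₀ h2.le h1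

lemma summable_term (hab : a ≤ b) (ha : 0 < a) {n : ℕ} {x : ℝ} (hx : x ∈ Ioi (-(a/2))) :
    Summable (fun m : ℕ => term a b (n + 1) m x) := by
  have hxa : a / 2 ≤ x + a := by simp only [Set.mem_Ioi] at hx; linarith
  have h2 : 0 < a / 2 := by linarith
  apply Summable.of_nonneg_of_le
    (fun m => term_nonneg hab (lt_of_lt_of_le h2 hxa))
    (fun m => term_le hab h2 hxa)
  exact (summable_aux h2 n).mul_left _


open Set Real Filter Finset

variable {a b : ℝ}

lemma hasDerivAt_term (n m : ℕ) {x : ℝ} (hxa : 0 < x + a) (hxb : 0 < x + b) :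
    HasDerivAt (fun y => term a b (n + 1) m y) (-(n + 1 : ℝ) * term a b (n + 2) m x) x := by
  have hm : (0:ℝ) ≤ m := Nat.cast_nonneg m
  have hA : x + (a + m) ≠ 0 := by nlinarith
  have hB : x + (b + m) ≠ 0 := by nlinarith
  have h1 := hasDerivAt_inv_pow_shift (n + 1) (c := a + m) hA
  have h2 := hasDerivAt_inv_pow_shift (n + 1) (c := b + m) hB
  have h := h1.sub h2
  have hfun : (fun y : ℝ => ((y + (a + m)) ^ (n + 1))⁻¹ - ((y + (b + m)) ^ (n + 1))⁻¹)
      = fun y => term a b (n + 1) m y := by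
    funext y; simp only [term, add_assoc]
  simp only [Pi.sub_def] at h
  rw [hfun] at h
  refine h.congr_deriv ?_
  simp only [term, add_assoc]
  push_cast
  ring

lemma hasDerivAt_P (ha : 0 < a) (hab : a ≤ b) (n : ℕ) {x : ℝ} (hx : x ∈ Ioi (-(a/2))) :
    HasDerivAt (P a b (n + 1)) (-(n + 1 : ℝ) * P a b (n + 2) x) x := by
  have h2 : 0 < a / 2 := by linarith
  have hmem : ∀ y : ℝ, y ∈ Ioi (-(a/2)) → 0 < y + a ∧ 0 < y + b := by
    intro y hy
    simp only [Set.mem_Ioi] at hy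
    constructor <;> linarith
  have hunif : TendstoUniformlyOn (fun (N : ℕ) x => ∑ m ∈ range N, -(n + 1 : ℝ) * term a b (n + 2) m x)
      (fun x => -(n + 1 : ℝ) * P a b (n + 2) x) atTop (Ioi (-(a/2))) := by
    have hu : Summable (fun m : ℕ => (n + 1 : ℝ) * ((n + 2 : ℝ) * (b - a) * ((a/2 + m) ^ (n + 3))⁻¹)) :=
      ((summable_aux h2 (n + 1)).mul_left _).mul_left _
    have := tendstoUniformlyOn_tsum_nat hu
      (f := fun m x => -(n + 1 : ℝ) * term a b (n + 2) m x) (s := Ioi (-(a/2))) ?_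
    · convert this using 2 with x
      rw [P]
      exact (tsum_mul_left).symm
    · intro m y hy
      have hya : a / 2 ≤ y + a := by simp only [Set.mem_Ioi] at hy; linarith
      rw [norm_mul, norm_neg]
      have h0 := term_nonneg (n := n + 2) (m := m) hab (lt_of_lt_of_le h2 hya)
      rw [Real.norm_eq_abs, Real.norm_eq_abs, abs_of_nonneg h0]
      have : |(n + 1 : ℝ)| = (n + 1 : ℝ) := abs_of_nonneg (by positivity)
      rw [this]
      have hle := term_le (n := n + 1) (m := m) hab h2 hya
      have hle' : term a b (n + 2) m y ≤ (↑n + 2) * (b - a) * ((a / 2 + ↑m) ^ (n + 3))⁻¹ := by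
        convert hle using 2 <;> push_cast <;> ring
      exact mul_le_mul_of_nonneg_left hle' (by positivity)
  have hder : ∀ᶠ (N : ℕ) in atTop, ∀ y ∈ Ioi (-(a/2)),
      HasDerivAt (fun x => ∑ m ∈ range N, term a b (n + 1) m x)
        (∑ m ∈ range N, -(n + 1 : ℝ) * term a b (n + 2) m y) y := by
    apply Eventually.of_forall
    intro N y hy
    exact HasDerivAt.fun_sum fun m _ => hasDerivAt_term n m (hmem y hy).1 (hmem y hy).2
  have hpt : ∀ y ∈ Ioi (-(a/2)), Tendsto (fun N : ℕ => ∑ m ∈ range N, term a b (n + 1) m y)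
      atTop (𝓝 (P a b (n + 1) y)) := by
    intro y hy
    exact (summable_term hab ha hy).hasSum.tendsto_sum_nat
  exact hasDerivAt_of_tendstoUniformlyOn isOpen_Ioi hunif hder hpt hx

lemma tendsto_logGamma_diff (ha : 0 < a) (hb : 0 < b) (hab : a ≤ b)
    {x : ℝ} (hx : x ∈ Ioi (-(a/2))) :
    Tendsto (fun N : ℕ => (b - a) * Real.log N
        + ∑ m ∈ range (N + 1), (Real.log (x + a + m) - Real.log (x + b + m)))
      atTop (𝓝 (Real.log (Real.Gamma (x + b)) - Real.log (Real.Gamma (x + a)))) := by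
  have hxa : 0 < x + a := by simp only [Set.mem_Ioi] at hx; linarith
  have hxb : 0 < x + b := by linarith
  have hA := (Real.GammaSeq_tendsto_Gamma (x + a)).log (Real.Gamma_pos_of_pos hxa).ne'
  have hB := (Real.GammaSeq_tendsto_Gamma (x + b)).log (Real.Gamma_pos_of_pos hxb).ne'
  have h := hB.sub hA
  apply h.congr'
  filter_upwards [eventually_ge_atTop 1] with N hN
  have hN0 : (0:ℝ) < N := by exact_mod_cast hN
  have hlog : ∀ s : ℝ, 0 < s → Real.log (Real.GammaSeq s N)
      = s * Real.log N + Real.log (N.factorial) - ∑ j ∈ range (N + 1), Real.log (s + j) := by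
    intro s hs
    have hsj : ∀ j : ℕ, (0:ℝ) < s + j := by
      intro j; have : (0:ℝ) ≤ j := Nat.cast_nonneg j; linarith
    have hprod : ∀ j ∈ range (N + 1), s + (j:ℝ) ≠ 0 := fun j _ => (hsj j).ne'
    have hprodpos : (0:ℝ) < ∏ j ∈ range (N + 1), (s + j) :=
      Finset.prod_pos fun j _ => hsj j
    rw [Real.GammaSeq, Real.log_div (by positivity) hprodpos.ne',
      Real.log_mul (by positivity) (by exact_mod_cast N.factorial_pos.ne'),
      Real.log_rpow hN0, Real.log_prod hprod]
  rw [hlog (x + b) hxb, hlog (x + a) hxa]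
  rw [Finset.sum_sub_distrib]
  ring



lemma hasDerivAt_D (ha : 0 < a) (hb : 0 < b) (hab : a ≤ b) {x : ℝ} (hx : x ∈ Ioi (-(a/2))) :
    HasDerivAt (fun y => Real.log (Real.Gamma (y + b)) - Real.log (Real.Gamma (y + a)))
      (P a b 1 x) x := by
  have h2 : 0 < a / 2 := by linarith
  have hmem : ∀ y : ℝ, y ∈ Ioi (-(a/2)) → 0 < y + a ∧ 0 < y + b := by
    intro y hy
    simp only [Set.mem_Ioi] at hy
    constructor <;> linarith
  have hunif : TendstoUniformlyOn
      (fun (N : ℕ) x => ∑ m ∈ range (N + 1), term a b 1 m x)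
      (P a b 1) atTop (Ioi (-(a/2))) := by
    have hu : Summable (fun m : ℕ => (1 : ℝ) * (b - a) * ((a/2 + m) ^ 2)⁻¹) :=
      (summable_aux h2 0).mul_left _
    have h := tendstoUniformlyOn_tsum_nat hu
      (f := fun m x => term a b 1 m x) (s := Ioi (-(a/2))) ?_
    · intro v hv
      exact (tendsto_add_atTop_nat 1).eventually (h v hv)
    · intro m y hy
      have hya : a / 2 ≤ y + a := by simp only [Set.mem_Ioi] at hy; linarith
      have h0 := term_nonneg (n := 1) (m := m) hab (lt_of_lt_of_le h2 hya)
      rw [Real.norm_eq_abs, abs_of_nonneg h0]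
      have := term_le (n := 0) (m := m) hab h2 hya
      convert this using 2 <;> norm_num
  have hder : ∀ᶠ (N : ℕ) in atTop, ∀ y ∈ Ioi (-(a/2)),
      HasDerivAt (fun x => (b - a) * Real.log N
          + ∑ m ∈ range (N + 1), (Real.log (x + a + m) - Real.log (x + b + m)))
        (∑ m ∈ range (N + 1), term a b 1 m y) y := by
    apply Eventually.of_forall
    intro N y hy
    have hm : ∀ m : ℕ, (0:ℝ) ≤ m := fun m => Nat.cast_nonneg m
    have h : HasDerivAt (fun x => ∑ m ∈ range (N + 1),
        (Real.log (x + a + m) - Real.log (x + b + m)))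
        (∑ m ∈ range (N + 1), term a b 1 m y) y := by
      apply HasDerivAt.fun_sum
      intro m _
      have hya : (0:ℝ) < y + a + m := by
        have := (hmem y hy).1; have := hm m; linarith
      have hyb : (0:ℝ) < y + b + m := by
        have := (hmem y hy).2; have := hm m; linarith
      have l1 : HasDerivAt (fun x : ℝ => Real.log (x + a + m)) (y + a + m)⁻¹ y := by
        simpa using (((hasDerivAt_id y).add_const a).add_const (m:ℝ)).log hya.ne'
      have l2 : HasDerivAt (fun x : ℝ => Real.log (x + b + m)) (y + b + m)⁻¹ y := by
        simpa using (((hasDerivAt_id y).add_const b).add_const (m:ℝ)).log hyb.ne'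
      have := l1.sub l2
      refine this.congr_deriv ?_
      simp [term]
    simpa using h.const_add ((b - a) * Real.log N)
  have hpt : ∀ y ∈ Ioi (-(a/2)), Tendsto (fun N : ℕ => (b - a) * Real.log N
        + ∑ m ∈ range (N + 1), (Real.log (y + a + m) - Real.log (y + b + m)))
      atTop (𝓝 (Real.log (Real.Gamma (y + b)) - Real.log (Real.Gamma (y + a)))) :=
    fun y hy => tendsto_logGamma_diff ha hb hab hy
  exact hasDerivAt_of_tendstoUniformlyOn isOpen_Ioi hunif hder hpt hx

noncomputable def Q (a b β : ℝ) (n : ℕ) (x : ℝ) : ℝ := P a b n x - β * ((x + a) ^ n)⁻¹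

noncomputable def F (a b β c₀ : ℝ) (x : ℝ) : ℝ :=
  Real.log c₀ + (Real.log (Real.Gamma (x + b)) - Real.log (Real.Gamma (x + a)))
    - β * Real.log (x + a)

noncomputable def Fd (a b β c₀ : ℝ) : ℕ → ℝ → ℝ
  | 0 => F a b β c₀
  | (k + 1) => fun x => (-1 : ℝ) ^ k * (k.factorial : ℝ) * Q a b β (k + 1) x

lemma hasDerivAt_Q {β : ℝ} (ha : 0 < a) (hab : a ≤ b) (n : ℕ) {x : ℝ} (hx : x ∈ Ioi (-(a/2))) :
    HasDerivAt (Q a b β (n + 1)) (-(n + 1 : ℝ) * Q a b β (n + 2) x) x := by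
  have hxa : x + a ≠ 0 := by
    simp only [Set.mem_Ioi] at hx
    have : 0 < x + a := by linarith
    exact this.ne'
  have h1 := hasDerivAt_P ha hab n hx
  have h2 := (hasDerivAt_inv_pow_shift (n + 1) (c := a) hxa).const_mul β
  have h := h1.sub h2
  have hfun : (fun y => P a b (n + 1) y - β * ((y + a) ^ (n + 1))⁻¹) = Q a b β (n + 1) := by
    funext y; rw [Q]
  simp only [Pi.sub_def] at h
  rw [hfun] at h
  refine h.congr_deriv ?_
  rw [Q]
  push_cast
  ring

lemma chain_Fd {β c₀ : ℝ} (ha : 0 < a) (hb : 0 < b) (hab : a ≤ b) :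
    ∀ n, ∀ x ∈ Ioi (-(a/2)), HasDerivAt (Fd a b β c₀ n) (Fd a b β c₀ (n + 1) x) x := by
  intro n x hx
  match n with
  | 0 =>
    have hxa : 0 < x + a := by simp only [Set.mem_Ioi] at hx; linarith
    have h1 := hasDerivAt_D ha hb hab hx
    have h2 : HasDerivAt (fun y : ℝ => β * Real.log (y + a)) (β * (x + a)⁻¹) x := by
      simpa using (((hasDerivAt_id x).add_const a).log hxa.ne').const_mul β
    have h := (h1.const_add (Real.log c₀)).sub h2
    have hfun : (fun y => Real.log c₀ + (Real.log (Real.Gamma (y + b)) - Real.log (Real.Gamma (y + a)))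
        - β * Real.log (y + a)) = Fd a b β c₀ 0 := rfl
    simp only [Pi.sub_def] at h
    rw [hfun] at h
    refine h.congr_deriv (Eq.symm ?_)
    show (-1:ℝ)^0 * ((0:ℕ).factorial : ℝ) * Q a b β 1 x = _
    rw [Q]
    simp
  | (k + 1) =>
    have h := (hasDerivAt_Q (β := β) ha hab k hx).const_mul ((-1 : ℝ) ^ k * (k.factorial : ℝ))
    have hfun : (fun y => (-1 : ℝ) ^ k * (k.factorial : ℝ) * Q a b β (k + 1) y)
        = Fd a b β c₀ (k + 1) := rfl
    rw [hfun] at h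
    refine h.congr_deriv (Eq.symm ?_)
    show (-1:ℝ)^(k+1) * ((k+1).factorial : ℝ) * Q a b β (k + 2) x = _
    rw [Nat.factorial_succ]
    push_cast
    ring

lemma P_ge (ha : 0 < a) (hab : a ≤ b) (hba : b ≤ a + 1) (n : ℕ) {x : ℝ} (hx : 0 < x) :
    (b - a) * (((x + a) ^ (n + 1))⁻¹) ≤ P a b (n + 1) x := by
  have hxa : 0 < x + a := by linarith
  set l := b - a with hl
  have hl0 : 0 ≤ l := by rw [hl]; linarith
  have hl1 : l ≤ 1 := by rw [hl]; linarith
  set f : ℕ → ℝ := fun m => ((x + a + m) ^ (n + 1))⁻¹ with hf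
  have hfpos : ∀ m : ℕ, 0 < x + a + m := by
    intro m; have : (0:ℝ) ≤ m := Nat.cast_nonneg m; linarith
  -- telescoping sum
  have hmono : ∀ m : ℕ, f (m + 1) ≤ f m := by
    intro m
    rw [hf]
    apply inv_anti₀ (by positivity)
    apply pow_le_pow_left₀ (hfpos m).le
    push_cast; linarith
  have htend : Tendsto f atTop (𝓝 0) := by
    rw [hf]
    apply Tendsto.inv_tendsto_atTop
    apply Tendsto.comp (tendsto_pow_atTop (n := n + 1) (by omega))
    apply tendsto_atTop_add_const_left
    exact tendsto_natCast_atTop_atTop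
  have htel : HasSum (fun m => f m - f (m + 1)) (f 0) := by
    rw [hasSum_iff_tendsto_nat_of_nonneg (fun m => by linarith [hmono m]) _]
    have hps : ∀ N : ℕ, ∑ m ∈ range N, (f m - f (m + 1)) = f 0 - f N := by
      intro N
      have := Finset.sum_range_sub (fun i => -f i) N
      simp only [neg_sub_neg] at this
      exact this
    simp only [hps]
    simpa using tendsto_const_nhds.sub htend
  -- per-term inequality via convexity
  have hper : ∀ m : ℕ, l * (f m - f (m + 1)) ≤ term a b (n + 1) m x := by
    intro m
    set u := x + a + m with hu
    have hu0 : 0 < u := hfpos m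
    have hcvx : ConvexOn ℝ (Ioi (0:ℝ)) (fun y : ℝ => y ^ (-(n + 1 : ℕ) : ℤ)) :=
      (strictConvexOn_zpow (by omega) (by omega)).convexOn
    have key := hcvx.2 (Set.mem_Ioi.mpr hu0) (Set.mem_Ioi.mpr (by linarith : (0:ℝ) < u + 1))
      (by linarith : (0:ℝ) ≤ 1 - l) hl0 (by ring)
    simp only [smul_eq_mul] at key
    have harg : (1 - l) * u + l * (u + 1) = x + b + m := by rw [hu, hl]; ring
    rw [harg] at key
    have hz : ∀ y : ℝ, y ≠ 0 → y ^ (-(n + 1 : ℕ) : ℤ) = ((y ^ (n + 1)):ℝ)⁻¹ := by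
      intro y hy; rw [zpow_neg, zpow_natCast]
    have hxbm : (0:ℝ) < x + b + m := by
      have : (0:ℝ) ≤ m := Nat.cast_nonneg m
      linarith
    rw [hz _ hxbm.ne'] at key
    have key2 : ((x + b + m) ^ (n+1) : ℝ)⁻¹ ≤ (1 - l) * (u ^ (n+1))⁻¹ + l * ((u + 1) ^ (n+1))⁻¹ := by
      have e1 := hz u hu0.ne'
      have e2 := hz (u + 1) (by linarith : (u:ℝ) + 1 ≠ 0)
      rw [e1, e2] at key
      exact key
    have hfm : f m = (u ^ (n + 1))⁻¹ := rfl
    have hfm1 : f (m + 1) = ((u + 1) ^ (n + 1))⁻¹ := by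
      rw [hf, hu]; push_cast; ring_nf
    rw [term, hfm, hfm1]
    have : (x + a + m) = u := rfl
    rw [this]
    nlinarith [key2]
  have hsum_rhs : HasSum (fun m => l * (f m - f (m + 1))) (l * f 0) := htel.mul_left l
  have hsummable : Summable (fun m : ℕ => term a b (n + 1) m x) := by
    apply summable_term hab ha
    simp only [Set.mem_Ioi]
    linarith
  have := hsum_rhs.summable.tsum_le_tsum hper hsummable
  rw [hsum_rhs.tsum_eq] at this
  have hf0 : f 0 = ((x + a) ^ (n + 1))⁻¹ := by rw [hf]; norm_num
  rw [hf0] at this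
  exact this

lemma Q_nonneg {β : ℝ} (ha : 0 < a) (hab : a ≤ b) (hba : b ≤ a + 1) (hβ : β ≤ b - a)
    (n : ℕ) {x : ℝ} (hx : 0 < x) : 0 ≤ Q a b β (n + 1) x := by
  have h := P_ge ha hab hba n hx
  have hxa : (0:ℝ) < x + a := by linarith
  have hinv : (0:ℝ) ≤ ((x + a) ^ (n + 1))⁻¹ := by positivity
  rw [Q]
  nlinarith [mul_le_mul_of_nonneg_right hβ hinv]

lemma taylor_A_ge {β c₀ : ℝ} (ha : 0 < a) (hb : 0 < b) (hab : a ≤ b) (hba : b ≤ a + 1)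
    (hβ : β ≤ b - a) (n : ℕ) {x : ℝ} (hx : 0 < x) :
    F a b β c₀ 0 ≤ ∑ k ∈ range (n + 1), ((-1:ℝ)^k * x^k / (k.factorial : ℝ)) * Fd a b β c₀ k x := by
  set H : ℝ → ℝ := fun u => F a b β c₀ (x - u) with hH
  set Hd : ℕ → ℝ → ℝ := fun k u => (-1:ℝ)^k * Fd a b β c₀ k (x - u) with hHd_def
  have hIccV : Icc 0 x ⊆ Iio (x + a/2) := by
    intro u hu
    simp only [Set.mem_Icc] at hu
    simp only [Set.mem_Iio]
    linarith
  have hHd : ∀ k, ∀ u ∈ Iio (x + a/2), HasDerivAt (Hd k) (Hd (k + 1) u) u := by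
    intro k u hu
    have hmem : x - u ∈ Ioi (-(a/2)) := by
      simp only [Set.mem_Iio] at hu
      simp only [Set.mem_Ioi]
      linarith
    have h := ((chain_Fd (β := β) (c₀ := c₀) ha hb hab k (x - u) hmem).comp u
      ((hasDerivAt_const u x).sub (hasDerivAt_id u))).const_mul ((-1:ℝ)^k)
    refine h.congr_deriv (Eq.symm ?_)
    show (-1:ℝ)^(k+1) * Fd a b β c₀ (k+1) (x - u) = (-1:ℝ)^k * (Fd a b β c₀ (k+1) (x - u) * (0 - 1))
    ring
  have hFd0 : Fd a b β c₀ 0 = F a b β c₀ := rfl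
  have hEq : EqOn H (Hd 0) (Icc 0 x) := by
    intro u _
    simp [hH, hHd_def, hFd0]
  have hunique := uniqueDiffOn_Icc hx
  have hiter := chain_iteratedDerivWithin hunique
    (fun k u hu => hHd k u (hIccV hu)) hEq
  have hsmooth : ContDiffOn ℝ (⊤ : ℕ∞) H (Icc 0 x) := by
    apply ((chain_contDiffOn isOpen_Iio hHd 0).congr (fun u hu => by simp [hH, hHd_def, hFd0])).mono hIccV
  have hsn : ContDiffOn ℝ n H (Icc 0 x) := hsmooth.of_le (by exact_mod_cast le_top)
  obtain ⟨ξ, hξ, heq⟩ : ∃ ξ ∈ Ioo 0 x, H x - taylorWithinEval H n (Icc 0 x) 0 x =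
      iteratedDerivWithin (n + 1) H (Icc 0 x) ξ * (x - 0) ^ (n + 1) / ((n + 1).factorial : ℝ) := by
    have := taylor_mean_remainder_lagrange hx.ne (f := H) (n := n) (by rwa [uIcc_of_le hx.le])
      (by
        rw [uIcc_of_le hx.le, uIoo_of_le hx.le]
        exact (fun u hu => (((hHd n u (hIccV (Ioo_subset_Icc_self hu))).differentiableAt.differentiableWithinAt).congr
          (fun y hy => hiter n (Ioo_subset_Icc_self hy)) (hiter n (Ioo_subset_Icc_self hu)))))
    rwa [uIcc_of_le hx.le, uIoo_of_le hx.le] at this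
  have h0mem : (0:ℝ) ∈ Icc 0 x := ⟨le_refl 0, hx.le⟩
  have hξI : ξ ∈ Icc 0 x := Ioo_subset_Icc_self hξ
  rw [taylor_within_apply] at heq
  have hsum : ∑ k ∈ range (n + 1), (((k.factorial : ℝ))⁻¹ * (x - 0)^k) • iteratedDerivWithin k H (Icc 0 x) 0
      = ∑ k ∈ range (n + 1), ((-1:ℝ)^k * x^k / (k.factorial : ℝ)) * Fd a b β c₀ k x := by
    apply Finset.sum_congr rfl
    intro k _
    rw [hiter k h0mem]
    simp only [hHd_def, sub_zero, smul_eq_mul]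
    ring
  rw [hsum] at heq
  have hHx : H x = F a b β c₀ 0 := by simp [hH]
  rw [hHx] at heq
  rw [hiter (n + 1) hξI] at heq
  have hQ : 0 ≤ Q a b β (n + 1) (x - ξ) := by
    apply Q_nonneg ha hab hba hβ
    simp only [Set.mem_Ioo] at hξ
    linarith [hξ.2]
  have hHdval : Hd (n + 1) ξ = -((n.factorial : ℝ) * Q a b β (n + 1) (x - ξ)) := by
    simp only [hHd_def]
    show (-1:ℝ)^(n+1) * ((-1:ℝ)^n * (n.factorial : ℝ) * Q a b β (n + 1) (x - ξ))
        = -((n.factorial : ℝ) * Q a b β (n + 1) (x - ξ))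
    have hpow : (-1:ℝ)^(n+1) * (-1:ℝ)^n = -1 := by
      rw [← pow_add]
      exact Odd.neg_one_pow ⟨n, by ring⟩
    linear_combination (n.factorial : ℝ) * Q a b β (n + 1) (x - ξ) * hpow
  rw [hHdval] at heq
  have hpow : (0:ℝ) < (x - 0)^(n + 1) := by
    apply pow_pos; linarith
  have hfac : (0:ℝ) < ((n+1).factorial : ℝ) := by exact_mod_cast (n+1).factorial_pos
  have hQf : (0:ℝ) ≤ (n.factorial : ℝ) * Q a b β (n + 1) (x - ξ) := by positivity
  have hrem : F a b β c₀ 0 - ∑ k ∈ range (n + 1), ((-1:ℝ)^k * x^k / (k.factorial : ℝ)) * Fd a b β c₀ k x ≤ 0 := by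
    rw [heq]
    apply div_nonpos_of_nonpos_of_nonneg _ hfac.le
    nlinarith
  linarith

lemma F0_nonneg {β c₀ : ℝ} (ha : 0 < a) (hb : 0 < b)
    (hc₀ : a ^ β * Real.Gamma a / Real.Gamma b ≤ c₀) : 0 ≤ F a b β c₀ 0 := by
  have hGa := Real.Gamma_pos_of_pos ha
  have hGb := Real.Gamma_pos_of_pos hb
  have hr : (0:ℝ) < a ^ β := Real.rpow_pos_of_pos ha β
  have hpos : 0 < a ^ β * Real.Gamma a / Real.Gamma b := by positivity
  have hlog : Real.log (a ^ β * Real.Gamma a / Real.Gamma b) ≤ Real.log c₀ :=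
    Real.log_le_log hpos hc₀
  rw [Real.log_div (by positivity) hGb.ne', Real.log_mul hr.ne' hGa.ne',
    Real.log_rpow ha] at hlog
  rw [F]
  simp only [zero_add]
  linarith

noncomputable def invd (n : ℕ) (x : ℝ) : ℝ := (-1:ℝ)^n * (n.factorial : ℝ) * ((x ^ (n+1))⁻¹)

lemma chain_invd : ∀ n, ∀ x ∈ Ioi (0:ℝ), HasDerivAt (invd n) (invd (n+1) x) x := by
  intro n x hx
  have hx0 : x ≠ 0 := (Set.mem_Ioi.mp hx).ne'
  have h := (hasDerivAt_inv_pow (n+1) hx0).const_mul ((-1:ℝ)^n * (n.factorial : ℝ))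
  refine h.congr_deriv (Eq.symm ?_)
  show (-1:ℝ)^(n+1) * ((n+1).factorial : ℝ) * ((x ^ (n+2))⁻¹) = _
  rw [Nat.factorial_succ]
  push_cast
  ring

noncomputable def Gd (a b β c₀ : ℝ) (n : ℕ) (x : ℝ) : ℝ :=
  ∑ k ∈ range (n + 1), (n.choose k : ℝ) * Fd a b β c₀ k x * invd (n - k) x

lemma chain_Gd {β c₀ : ℝ} (ha : 0 < a) (hb : 0 < b) (hab : a ≤ b) :
    ∀ n, ∀ x ∈ Ioi (0:ℝ), HasDerivAt (Gd a b β c₀ n) (Gd a b β c₀ (n + 1) x) x := by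
  have hsub : Ioi (0:ℝ) ⊆ Ioi (-(a/2)) := Ioi_subset_Ioi (by linarith)
  exact chain_mul (fun k y hy => chain_Fd ha hb hab k y (hsub hy)) chain_invd

lemma Gd_identity {β c₀ : ℝ} (n : ℕ) {x : ℝ} (hx : 0 < x) :
    (-1:ℝ)^n * Gd a b β c₀ n x = (n.factorial : ℝ) * ((x ^ (n+1))⁻¹) *
      ∑ k ∈ range (n + 1), ((-1:ℝ)^k * x^k / (k.factorial : ℝ)) * Fd a b β c₀ k x := by
  have hx0 : x ≠ 0 := hx.ne'
  rw [Gd, Finset.mul_sum, Finset.mul_sum]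
  apply Finset.sum_congr rfl
  intro k hk
  have hkn : k ≤ n := by
    rw [Finset.mem_range] at hk; omega
  rw [invd]
  have hsign : (-1:ℝ)^(n-k) * (-1:ℝ)^k = (-1:ℝ)^n := by
    rw [← pow_add, Nat.sub_add_cancel hkn]
  have hsq : ((-1:ℝ)^(n-k)) * ((-1:ℝ)^(n-k)) = 1 := by
    rw [← pow_add, ← two_mul, pow_mul]
    norm_num
  have hs2 : (-1:ℝ)^n * (-1:ℝ)^(n-k) = (-1:ℝ)^k := by
    rw [← hsign]
    calc (-1:ℝ)^(n-k) * (-1:ℝ)^k * (-1:ℝ)^(n-k)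
        = ((-1:ℝ)^(n-k) * (-1:ℝ)^(n-k)) * (-1:ℝ)^k := by ring
      _ = (-1:ℝ)^k := by rw [hsq, one_mul]
  have hxpow : x^(n-k+1) * x^k = x^(n+1) := by
    rw [← pow_add]
    congr 1
    omega
  have hinv : (x^(n-k+1))⁻¹ = x^k * (x^(n+1))⁻¹ := by
    rw [← hxpow, mul_inv]
    field_simp
  have hchoose : (n.choose k : ℝ) * (k.factorial : ℝ) * ((n-k).factorial : ℝ)
      = (n.factorial : ℝ) := by
    exact_mod_cast congrArg (Nat.cast : ℕ → ℝ) (Nat.choose_mul_factorial_mul_factorial hkn)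
  have hkf : (k.factorial : ℝ) ≠ 0 := by exact_mod_cast k.factorial_ne_zero
  have hkk : (k.factorial : ℝ) * ((k.factorial : ℝ))⁻¹ = 1 := mul_inv_cancel₀ hkf
  rw [hinv, div_eq_mul_inv]
  linear_combination (n.choose k : ℝ) * Fd a b β c₀ k x * ((n-k).factorial : ℝ) * x^k
        * ((x^(n+1))⁻¹) * hs2
    + ((x^(n+1))⁻¹) * (-1:ℝ)^k * x^k * ((k.factorial : ℝ))⁻¹ * Fd a b β c₀ k x * hchoose
    - (n.choose k : ℝ) * Fd a b β c₀ k x * ((n-k).factorial : ℝ) * x^k * ((x^(n+1))⁻¹)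
        * (-1:ℝ)^k * hkk

lemma Gd_nonneg {β c₀ : ℝ} (ha : 0 < a) (hb : 0 < b) (hab : a ≤ b) (hba : b ≤ a + 1)
    (hβ : β ≤ b - a) (hc₀ : a ^ β * Real.Gamma a / Real.Gamma b ≤ c₀)
    (n : ℕ) {x : ℝ} (hx : 0 < x) : 0 ≤ (-1:ℝ)^n * Gd a b β c₀ n x := by
  rw [Gd_identity n hx]
  have h1 := taylor_A_ge (β := β) (c₀ := c₀) ha hb hab hba hβ n hx
  have h0 := F0_nonneg (β := β) ha hb hc₀
  have : (0:ℝ) ≤ (n.factorial : ℝ) * ((x ^ (n+1))⁻¹) := by positivity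
  nlinarith

lemma chain_of_contDiffOn {gf : ℝ → ℝ} (hg : ContDiffOn ℝ (⊤ : ℕ∞) gf (Ioi 0)) :
    ∀ n, ∀ x ∈ Ioi (0:ℝ), HasDerivAt (iteratedDerivWithin n gf (Ioi 0))
      (iteratedDerivWithin (n + 1) gf (Ioi 0) x) x := by
  intro n x hx
  have hdo : DifferentiableOn ℝ (iteratedDerivWithin n gf (Ioi 0)) (Ioi 0) :=
    hg.differentiableOn_iteratedDerivWithin (by exact_mod_cast ENat.coe_lt_top n)
      isOpen_Ioi.uniqueDiffOn
  have hda : DifferentiableAt ℝ (iteratedDerivWithin n gf (Ioi 0)) x :=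
    (hdo x hx).differentiableAt (isOpen_Ioi.mem_nhds hx)
  have : iteratedDerivWithin (n + 1) gf (Ioi 0) x
      = deriv (iteratedDerivWithin n gf (Ioi 0)) x := by
    rw [iteratedDerivWithin_succ,
      derivWithin_of_isOpen isOpen_Ioi hx]
  rw [this]
  exact hda.hasDerivAt

end CMAux
end CMAuxSection

theorem gamma_ratio_rpow_div_x_log_completely_monotone (a b β c₀ : ℝ)
    (ha : 0 < a) (hb : 0 < b) (h1 : 0 < 1 - b + a) (h2 : 1 - b + a ≤ 1)
    (hβ : β ≤ b - a) (hc₀ : a ^ β * Real.Gamma a / Real.Gamma b ≤ c₀)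
    (g : ℝ → ℝ) (hg : CompletelyMonotoneOn g (Set.Ioi 0)) :
    LogCompletelyMonotoneOn
      (fun x => (c₀ * Real.Gamma (x + b) / ((x + a) ^ β * Real.Gamma (x + a))) ^ (g x / x))
      (Set.Ioi 0) := by

  obtain ⟨hgsmooth, hgsign⟩ := hg
  have hab : a ≤ b := by linarith
  have hba : b ≤ a + 1 := by linarith
  have hc0 : 0 < c₀ := by
    have h3 : 0 < a ^ β * Real.Gamma a / Real.Gamma b :=
      div_pos (mul_pos (Real.rpow_pos_of_pos ha β) (Real.Gamma_pos_of_pos ha))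
        (Real.Gamma_pos_of_pos hb)
    linarith
  have hbasepos : ∀ x ∈ Set.Ioi (0:ℝ),
      0 < c₀ * Real.Gamma (x + b) / ((x + a) ^ β * Real.Gamma (x + a)) := by
    intro x hx
    rw [Set.mem_Ioi] at hx
    have hxa : 0 < x + a := by linarith
    have hxb : 0 < x + b := by linarith
    exact div_pos (mul_pos hc0 (Real.Gamma_pos_of_pos hxb))
      (mul_pos (Real.rpow_pos_of_pos hxa β) (Real.Gamma_pos_of_pos hxa))
  have hgchain := CMAux.chain_of_contDiffOn hgsmooth
  have hGdchain := CMAux.chain_Gd (β := β) (c₀ := c₀) ha hb hab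
  have hpdchain := CMAux.chain_mul (s := Set.Ioi (0:ℝ))
    (u := fun n => iteratedDerivWithin n g (Set.Ioi 0))
    (v := CMAux.Gd a b β c₀) hgchain hGdchain
  have hEqOn : Set.EqOn
      (fun x => Real.log ((c₀ * Real.Gamma (x + b) / ((x + a) ^ β * Real.Gamma (x + a))) ^ (g x / x)))
      (fun y => ∑ k ∈ Finset.range (0 + 1), ((Nat.choose 0 k : ℝ))
        * iteratedDerivWithin k g (Set.Ioi 0) y * CMAux.Gd a b β c₀ (0 - k) y)
      (Set.Ioi 0) := by
    intro x hx
    have hx0 : 0 < x := hx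
    have hxa : 0 < x + a := by linarith
    have hxb : 0 < x + b := by linarith
    have hGxa := Real.Gamma_pos_of_pos hxa
    have hGxb := Real.Gamma_pos_of_pos hxb
    have hrp := Real.rpow_pos_of_pos hxa β
    have hlog1 : Real.log ((c₀ * Real.Gamma (x + b) / ((x + a) ^ β * Real.Gamma (x + a))) ^ (g x / x))
        = (g x / x) * Real.log (c₀ * Real.Gamma (x + b) / ((x + a) ^ β * Real.Gamma (x + a))) :=
      Real.log_rpow (hbasepos x hx) _
    have hlog2 : Real.log (c₀ * Real.Gamma (x + b) / ((x + a) ^ β * Real.Gamma (x + a)))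
        = CMAux.F a b β c₀ x := by
      rw [Real.log_div (by positivity) (by positivity), Real.log_mul hc0.ne' hGxb.ne',
        Real.log_mul hrp.ne' hGxa.ne', Real.log_rpow hxa, CMAux.F]
      ring
    show Real.log ((c₀ * Real.Gamma (x + b) / ((x + a) ^ β * Real.Gamma (x + a))) ^ (g x / x)) = _
    rw [hlog1, hlog2]
    beta_reduce
    rw [Finset.sum_range_one]
    have hgd0 : iteratedDerivWithin 0 g (Set.Ioi (0:ℝ)) x = g x := by
      rw [iteratedDerivWithin_zero]
    rw [hgd0]
    have hGd0 : CMAux.Gd a b β c₀ 0 x = CMAux.F a b β c₀ x * x⁻¹ := by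
      rw [CMAux.Gd, Finset.sum_range_one]
      have hfd : CMAux.Fd a b β c₀ 0 = CMAux.F a b β c₀ := rfl
      rw [CMAux.invd, hfd]
      norm_num
    rw [hGd0]
    simp only [Nat.choose_self, Nat.cast_one, one_mul]
    field_simp
  refine ⟨?_, ?_, ?_⟩
  · intro x hx
    exact Real.rpow_pos_of_pos (hbasepos x hx) _
  · exact (CMAux.chain_contDiffOn isOpen_Ioi hpdchain 0).congr hEqOn
  · intro n hn x hx
    rw [CMAux.chain_iteratedDerivWithin isOpen_Ioi.uniqueDiffOn hpdchain hEqOn n hx]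
    rw [Finset.mul_sum]
    apply Finset.sum_nonneg
    intro k hk
    have hkn : k ≤ n := by rw [Finset.mem_range] at hk; omega
    have hsign : (-1:ℝ)^k * (-1:ℝ)^(n-k) = (-1:ℝ)^n := by
      rw [← pow_add]
      congr 1
      omega
    have hgk := hgsign k x hx
    have hGk := CMAux.Gd_nonneg (β := β) (c₀ := c₀) ha hb hab hba hβ hc₀ (n - k) hx
    have hre : (-1:ℝ)^n * ((n.choose k : ℝ) * iteratedDerivWithin k g (Set.Ioi 0) x
          * CMAux.Gd a b β c₀ (n-k) x)
        = (n.choose k : ℝ) * (((-1:ℝ)^k * iteratedDerivWithin k g (Set.Ioi 0) x)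
          * ((-1:ℝ)^(n-k) * CMAux.Gd a b β c₀ (n-k) x)) := by
      rw [← hsign]
      ring
    rw [hre]
    exact mul_nonneg (Nat.cast_nonneg _) (mul_nonneg hgk hGk)
end

section
/- Let 0 ≤ β ≤ 1. Then the function x ↦ 1 + (1/x)·log Γ(x + 1) - log(x + β) is completely monotone on (0, ∞). -/
set_option maxHeartbeats 1000000

open Set Real MeasureTheory Filter intervalIntegral Metric Topology

namespace CMproof


/-- the basic kernel integral -/
noncomputable def vv (m k : ℕ) (x : ℝ) : ℝ :=
  ∫ s in (0:ℝ)..1, s ^ m / ((k + 1 : ℝ) + x * s) ^ (m + 1)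

/-- auxiliary integral -/
noncomputable def BB (m k : ℕ) (x : ℝ) : ℝ :=
  ∫ s in (0:ℝ)..1, s ^ m / ((k + 1 : ℝ) + x * s) ^ m

lemma denom_pos (k : ℕ) {x s : ℝ} (hx : 0 ≤ x) (hs : 0 ≤ s) :
    0 < (k + 1 : ℝ) + x * s := by positivity

lemma contOn (m p k : ℕ) {x : ℝ} (hx : 0 ≤ x) :
    ContinuousOn (fun s : ℝ => s ^ m / ((k + 1 : ℝ) + x * s) ^ p) (Icc 0 1) := by
  apply (continuous_pow m).continuousOn.div
    ((continuous_const.add (continuous_const.mul continuous_id)).pow p).continuousOn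
  intro s hs
  exact pow_ne_zero _ (denom_pos k hx hs.1).ne'

lemma integrable_kernel (m p k : ℕ) {x : ℝ} (hx : 0 ≤ x) :
    IntervalIntegrable (fun s : ℝ => s ^ m / ((k + 1 : ℝ) + x * s) ^ p) volume 0 1 :=
  ((contOn m p k hx).mono (by rw [uIcc_of_le zero_le_one])).intervalIntegrable

lemma vv_nonneg (m k : ℕ) {x : ℝ} (hx : 0 ≤ x) : 0 ≤ vv m k x := by
  apply intervalIntegral.integral_nonneg zero_le_one
  intro s hs
  exact div_nonneg (pow_nonneg hs.1 m) (pow_nonneg (denom_pos k hx hs.1).le _)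

lemma BB_nonneg (m k : ℕ) {x : ℝ} (hx : 0 ≤ x) : 0 ≤ BB m k x := by
  apply intervalIntegral.integral_nonneg zero_le_one
  intro s hs
  exact div_nonneg (pow_nonneg hs.1 m) (pow_nonneg (denom_pos k hx hs.1).le _)

lemma vv_le (m k : ℕ) {x : ℝ} (hx : 0 ≤ x) :
    vv m k x ≤ (((k:ℝ) + 1) ^ (m + 1))⁻¹ := by
  have h : vv m k x ≤ ∫ s in (0:ℝ)..1, (((k:ℝ) + 1) ^ (m + 1))⁻¹ := by
    apply intervalIntegral.integral_mono_on zero_le_one (integrable_kernel m (m+1) k hx)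
      intervalIntegrable_const
    intro s hs
    have h1 : s ^ m ≤ 1 := pow_le_one₀ hs.1 hs.2
    have h2 : ((k:ℝ) + 1) ^ (m + 1) ≤ ((k + 1 : ℝ) + x * s) ^ (m + 1) := by
      apply pow_le_pow_left₀ (by positivity)
      nlinarith [mul_nonneg hx hs.1]
    calc s ^ m / ((k + 1 : ℝ) + x * s) ^ (m + 1)
        ≤ 1 / ((k:ℝ) + 1) ^ (m + 1) :=
          div_le_div₀ zero_le_one h1 (by positivity) h2
        _ = (((k:ℝ) + 1) ^ (m + 1))⁻¹ := one_div _
  simpa using h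


/-- pointwise derivative of the kernel in `x` -/
lemma kernel_hasDerivAt (m k : ℕ) {x s : ℝ} (hx : 0 < x) (hs : 0 ≤ s) :
    HasDerivAt (fun y : ℝ => s ^ m / ((k + 1 : ℝ) + y * s) ^ (m + 1))
      (-((m:ℝ) + 1) * (s ^ (m+1) / ((k + 1 : ℝ) + x * s) ^ (m + 2))) x := by
  have hu : HasDerivAt (fun y : ℝ => (k + 1 : ℝ) + y * s) s x := by
    simpa using (hasDerivAt_id x).mul_const s |>.const_add ((k:ℝ)+1)
  have hpos := denom_pos k hx.le hs
  have hg : HasDerivAt (fun y : ℝ => ((k + 1 : ℝ) + y * s) ^ (m+1))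
      (((m:ℝ)+1) * ((k + 1 : ℝ) + x * s) ^ m * s) x := by
    simpa using hu.fun_pow (m+1)
  have h := (hasDerivAt_const x (s ^ m)).div hg (pow_ne_zero _ hpos.ne')
  refine h.congr_deriv (Eq.symm ?_)
  field_simp
  ring

lemma vv_hasDerivAt (m k : ℕ) {x : ℝ} (hx : 0 < x) :
    HasDerivAt (vv m k) (-((m:ℝ) + 1) * vv (m+1) k x) x := by
  have hmeas : ∀ y : ℝ, AEStronglyMeasurable
      (fun s : ℝ => s ^ m / ((k + 1 : ℝ) + y * s) ^ (m+1)) (volume.restrict (Set.uIoc (0:ℝ) 1)) := by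
    intro y
    apply Measurable.aestronglyMeasurable
    exact (measurable_id.pow_const m).div
      ((measurable_const.add (measurable_id.const_mul y)).pow_const (m+1))
  have h := intervalIntegral.hasDerivAt_integral_of_dominated_loc_of_deriv_le
      (F := fun y s => s ^ m / ((k + 1 : ℝ) + y * s) ^ (m+1))
      (F' := fun y s => -((m:ℝ) + 1) * (s ^ (m+1) / ((k + 1 : ℝ) + y * s) ^ (m + 2)))
      (x₀ := x) (a := 0) (b := 1) (bound := fun _ => ((m:ℝ)+1))
      (ball_mem_nhds x (half_pos hx)) (Eventually.of_forall hmeas) (integrable_kernel m (m+1) k hx.le)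
      ?_ ?_ intervalIntegrable_const ?_
  · have : (∫ s in (0:ℝ)..1, -((m:ℝ) + 1) * (s ^ (m+1) / ((k + 1 : ℝ) + x * s) ^ (m + 2)))
        = -((m:ℝ) + 1) * vv (m+1) k x := by
      rw [vv, ← intervalIntegral.integral_const_mul]
    rw [← this]
    exact h.2
  · apply Measurable.aestronglyMeasurable
    exact ((measurable_id.pow_const (m+1)).div
      ((measurable_const.add (measurable_id.const_mul x)).pow_const (m+2))).const_mul _
  · -- bound
    filter_upwards with s hs y hy
    rw [uIoc_of_le zero_le_one] at hs
    have hs0 : (0:ℝ) ≤ s := hs.1.le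
    have hs1 : s ≤ 1 := hs.2
    have hy0 : 0 < y := by
      have := mem_ball_iff_norm.mp hy
      have : |y - x| < x/2 := by simpa [Real.norm_eq_abs] using this
      have := abs_lt.mp this
      linarith
    have hpos := denom_pos k hy0.le hs0
    have h1 : ((k:ℝ)+1) ≤ (k + 1 : ℝ) + y * s := by nlinarith
    have hd2 : (1:ℝ) ≤ ((k + 1 : ℝ) + y * s) ^ (m+2) := by
      apply one_le_pow₀
      nlinarith
    rw [norm_mul, norm_neg, norm_div]
    have hnum : ‖s ^ (m+1)‖ ≤ 1 := by
      rw [norm_pow, Real.norm_eq_abs, abs_of_nonneg hs0]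
      exact pow_le_one₀ hs0 hs1
    have hden : (1:ℝ) ≤ ‖((k + 1 : ℝ) + y * s) ^ (m+2)‖ := by
      rw [Real.norm_eq_abs, abs_of_nonneg (by positivity)]
      exact hd2
    have hdiv : ‖s ^ (m+1)‖ / ‖((k + 1 : ℝ) + y * s) ^ (m+2)‖ ≤ 1 :=
      (div_le_one (lt_of_lt_of_le one_pos hden)).2 (hnum.trans hden)
    have hnm : ‖(m:ℝ)+1‖ = (m:ℝ)+1 := by
      rw [Real.norm_eq_abs, abs_of_nonneg (by positivity)]
    calc ‖(m:ℝ)+1‖ * (‖s ^ (m+1)‖ / ‖((k + 1 : ℝ) + y * s) ^ (m+2)‖)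
        ≤ ‖(m:ℝ)+1‖ * 1 := by
          apply mul_le_mul_of_nonneg_left hdiv (norm_nonneg _)
      _ = (m:ℝ)+1 := by rw [mul_one, hnm]
  · filter_upwards with s hs y hy
    rw [uIoc_of_le zero_le_one] at hs
    have hy0 : 0 < y := by
      have := mem_ball_iff_norm.mp hy
      have : |y - x| < x/2 := by simpa [Real.norm_eq_abs] using this
      have := abs_lt.mp this
      linarith
    exact kernel_hasDerivAt m k hy0 hs.1.le

/-- exact FTC identity : m(k+1) vv + BB = ((k+1+x)^m)⁻¹ -/
lemma ftc_id (m k : ℕ) (hm : 1 ≤ m) {x : ℝ} (hx : 0 < x) :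
    (m:ℝ) * ((k:ℝ)+1) * vv m k x + BB m k x = (((k:ℝ) + 1 + x) ^ m)⁻¹ := by
  obtain ⟨j, rfl⟩ : ∃ j, m = j + 1 := ⟨m - 1, (Nat.succ_pred_eq_of_pos hm).symm⟩
  set c : ℝ := (k:ℝ) + 1 with hc
  have hderiv : ∀ s ∈ uIcc (0:ℝ) 1,
      HasDerivAt (fun s : ℝ => s ^ (j+2) / (c + x * s) ^ (j+1))
        ((((j:ℕ):ℝ)+1) * c * (s ^ (j+1) / (c + x * s) ^ (j+2)) + s ^ (j+1) / (c + x * s) ^ (j+1)) s := by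
    intro s hs
    rw [uIcc_of_le zero_le_one] at hs
    have hu : HasDerivAt (fun s : ℝ => c + x * s) x s := by
      simpa using ((hasDerivAt_id s).const_mul x).const_add c
    have hupos : 0 < c + x * s := denom_pos k hx.le hs.1
    have hg : HasDerivAt (fun s : ℝ => (c + x * s) ^ (j+1))
        ((((j:ℕ):ℝ)+1) * (c + x * s) ^ j * x) s := by
      have := hu.fun_pow (j+1)
      simpa [Nat.add_sub_cancel] using this
    have hf : HasDerivAt (fun s : ℝ => s ^ (j+2)) ((((j:ℕ):ℝ)+2) * s ^ (j+1)) s := by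
      have := hasDerivAt_pow (j+2) s
      simpa [Nat.add_sub_cancel] using this
    have h := hf.div hg (pow_ne_zero _ hupos.ne')
    refine h.congr_deriv (Eq.symm ?_)
    have hune : c + x * s ≠ 0 := hupos.ne'
    field_simp
    ring
  have hint : ∫ s in (0:ℝ)..1,
      ((((j:ℕ):ℝ)+1) * c * (s ^ (j+1) / (c + x * s) ^ (j+2)) + s ^ (j+1) / (c + x * s) ^ (j+1))
      = (1:ℝ) ^ (j+2) / (c + x * 1) ^ (j+1) - (0:ℝ) ^ (j+2) / (c + x * 0) ^ (j+1) := by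
    apply intervalIntegral.integral_eq_sub_of_hasDerivAt hderiv
    exact ((integrable_kernel (j+1) (j+2) k hx.le).const_mul _).add
      (integrable_kernel (j+1) (j+1) k hx.le)
  rw [intervalIntegral.integral_add ((integrable_kernel (j+1) (j+2) k hx.le).const_mul _)
      (integrable_kernel (j+1) (j+1) k hx.le), intervalIntegral.integral_const_mul] at hint
  have h0 : (0:ℝ) ^ (j+2) = 0 := zero_pow (Nat.succ_ne_zero _)
  rw [h0] at hint
  simp only [one_pow, mul_one, mul_zero, add_zero, zero_div, sub_zero] at hint
  have : ((j:ℕ):ℝ) + 1 = ((j+1 : ℕ) : ℝ) := by push_cast; ring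
  rw [vv, BB]
  rw [← this]
  rw [hint, one_div]

/-- Bernoulli-type inequality -/
lemma bern (m : ℕ) {y : ℝ} (hy : 0 < y) :
    y ^ m * (y + (m:ℝ) + 1) ≤ (y+1) ^ (m+1) := by
  have h0 : (0:ℝ) ≤ 1/y := by positivity
  have hb : 1 + (↑(m+1) : ℝ) * (1/y) ≤ (1 + 1/y) ^ (m+1) :=
    one_add_mul_le_pow (by linarith) (m+1)
  have h := mul_le_mul_of_nonneg_left hb (pow_pos hy (m+1)).le
  have hyne : y ≠ 0 := hy.ne'
  calc y ^ m * (y + (m:ℝ) + 1) = y^(m+1) * (1 + (↑(m+1) : ℝ) * (1/y)) := by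
        push_cast; field_simp; ring
    _ ≤ y^(m+1) * ((1 + 1/y) ^ (m+1)) := h
    _ = (y+1)^(m+1) := by
        rw [← mul_pow]
        congr 1
        field_simp

/-- pointwise telescoping inequality -/
lemma tele_pointwise (j : ℕ) {y : ℝ} (hy : 0 < y) :
    ((j:ℝ)+1) * (((y+1)+1)^(j+2))⁻¹ ≤ ((y+1)^(j+1))⁻¹ - (((y+1)+1)^(j+1))⁻¹ := by
  set z := y + 1 with hz
  have hzpos : 0 < z := by linarith
  have hApos : 0 < z^(j+1) := pow_pos hzpos _
  have hCpos : 0 < (z+1)^(j+2) := pow_pos (by linarith) _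
  have hkey : z^(j+1) * (z + ((j:ℝ)+1) + 1) ≤ (z+1)^(j+2) := by
    have := bern (j+1) hzpos
    push_cast at this
    convert this using 2
  have hP : (0:ℝ) ≤ (z+1)^(j+2) - z^(j+1)*(z+1) - ((j:ℝ)+1)*z^(j+1) := by nlinarith
  have hiden : (z^(j+1))⁻¹ - ((z+1)^(j+1))⁻¹ - ((j:ℝ)+1) * ((z+1)^(j+2))⁻¹
      = ((z+1)^(j+2) - z^(j+1)*(z+1) - ((j:ℝ)+1)*z^(j+1)) / (z^(j+1) * (z+1)^(j+2)) := by
    field_simp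
    ring
  have := div_nonneg hP (by positivity : (0:ℝ) ≤ z^(j+1) * (z+1)^(j+2))
  linarith [hiden ▸ this]

lemma tele_integral (j k : ℕ) {x : ℝ} (hx : 0 < x) :
    ((j:ℝ)+1) * vv (j+1) (k+1) x ≤ BB (j+1) k x - BB (j+1) (k+1) x := by
  rw [vv, BB, BB, ← intervalIntegral.integral_const_mul,
    ← intervalIntegral.integral_sub (integrable_kernel (j+1) (j+1) k hx.le)
      (integrable_kernel (j+1) (j+1) (k+1) hx.le)]
  apply intervalIntegral.integral_mono_on zero_le_one
    ((integrable_kernel (j+1) (j+2) (k+1) hx.le).const_mul _)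
    ((integrable_kernel (j+1) (j+1) k hx.le).sub (integrable_kernel (j+1) (j+1) (k+1) hx.le))
  intro s hs
  rcases eq_or_lt_of_le hs.1 with h0 | hspos
  · simp [← h0]
  · have hy : 0 < (k:ℝ) + x * s := by positivity
    have h := tele_pointwise j hy
    have h2 := mul_le_mul_of_nonneg_left h (pow_nonneg hs.1 (j+1))
    have e1 : ((k+1:ℕ) + 1 : ℝ) + x*s = ((k:ℝ) + x*s) + 1 + 1 := by push_cast; ring
    have e2 : ((k:ℝ)+1) + x*s = ((k:ℝ) + x*s) + 1 := by ring
    rw [e1, e2]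
    simp only [div_eq_mul_inv]
    ring_nf
    ring_nf at h2
    linarith

lemma summable_aux : Summable (fun k : ℕ => (((k:ℝ)+1)^2)⁻¹) := by
  have h : Summable (fun n : ℕ => 1 / (n : ℝ) ^ 2) := summable_one_div_nat_pow.mpr (by norm_num)
  have h2 := (summable_nat_add_iff 1).mpr h
  apply h2.congr
  intro n
  push_cast
  rw [one_div]

lemma summable_vv (j : ℕ) {x : ℝ} (hx : 0 < x) : Summable (fun k => vv (j+1) k x) := by
  apply Summable.of_nonneg_of_le (fun k => vv_nonneg _ _ hx.le) (fun k => ?_) summable_aux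
  refine (vv_le (j+1) k hx.le).trans ?_
  apply inv_anti₀ (by positivity)
  apply pow_le_pow_right₀ (by push_cast; linarith [Nat.cast_nonneg (α := ℝ) k])
  omega

lemma key_bound (j : ℕ) {x : ℝ} (hx : 0 < x) :
    ((j:ℝ)+1) * ∑' k, vv (j+1) k x ≤ ((1+x)^(j+1))⁻¹ := by
  have hsum := summable_vv j hx
  have hsumtail : Summable (fun k => vv (j+1) (k+1) x) := (summable_nat_add_iff 1).mpr hsum
  have htel : ∀ n : ℕ, ∑ i ∈ Finset.range n, (((j:ℝ)+1) * vv (j+1) (i+1) x) ≤ BB (j+1) 0 x := by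
    intro n
    calc ∑ i ∈ Finset.range n, (((j:ℝ)+1) * vv (j+1) (i+1) x)
        ≤ ∑ i ∈ Finset.range n, (BB (j+1) i x - BB (j+1) (i+1) x) := by
          apply Finset.sum_le_sum
          intro i _
          exact tele_integral j i hx
      _ = BB (j+1) 0 x - BB (j+1) n x := by
          exact Finset.sum_range_sub' (fun i => BB (j+1) i x) n
      _ ≤ BB (j+1) 0 x := by linarith [BB_nonneg (j+1) n hx.le]
  have htail : ∑' k, (((j:ℝ)+1) * vv (j+1) (k+1) x) ≤ BB (j+1) 0 x :=
    (hsumtail.mul_left _).tsum_le_of_sum_range_le htel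
  rw [tsum_mul_left] at htail
  have hzero := hsum.tsum_eq_zero_add
  have hftc := ftc_id (j+1) 0 (Nat.le_add_left 1 j) hx
  push_cast at hftc
  rw [hzero]
  calc ((j:ℝ)+1) * (vv (j+1) 0 x + ∑' k, vv (j+1) (k+1) x)
      = ((j:ℝ)+1) * vv (j+1) 0 x + ((j:ℝ)+1) * ∑' k, vv (j+1) (k+1) x := by ring
    _ ≤ ((j:ℝ)+1) * vv (j+1) 0 x + BB (j+1) 0 x := by linarith
    _ = ((1+x)^(j+1))⁻¹ := by
        have h := ftc_id (j+1) 0 (by omega) hx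
        push_cast at h
        norm_num at h
        linarith

lemma vv0_eq (k : ℕ) {x : ℝ} (hx : 0 < x) :
    vv 0 k x = (Real.log ((k:ℝ)+1+x) - Real.log ((k:ℝ)+1)) / x := by
  set c : ℝ := (k:ℝ) + 1 with hc
  have hderiv : ∀ s ∈ uIcc (0:ℝ) 1,
      HasDerivAt (fun s : ℝ => Real.log (c + x * s) / x) (s ^ 0 / (c + x * s) ^ (0+1)) s := by
    intro s hs
    rw [uIcc_of_le zero_le_one] at hs
    have hupos : 0 < c + x * s := denom_pos k hx.le hs.1
    have hu : HasDerivAt (fun s : ℝ => c + x * s) x s := by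
      simpa using ((hasDerivAt_id s).const_mul x).const_add c
    have hlog : HasDerivAt (fun s : ℝ => Real.log (c + x * s)) ((c + x * s)⁻¹ * x) s :=
      by have := (Real.hasDerivAt_log hupos.ne').comp s hu; exact this
    have := hlog.div_const x
    refine this.congr_deriv (Eq.symm ?_)
    field_simp
    ring
  have := intervalIntegral.integral_eq_sub_of_hasDerivAt hderiv
    (integrable_kernel 0 1 k hx.le)
  rw [vv, this]
  rw [mul_one, mul_zero, add_zero]
  ring


noncomputable def SS (m : ℕ) (x : ℝ) : ℝ := ∑' k, vv m k x


noncomputable def gg (x : ℝ) : ℝ :=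
  Real.eulerMascheroniConstant + (1/x) * Real.log (Real.Gamma (x+1))


noncomputable def uu (k : ℕ) (x : ℝ) : ℝ := ((k:ℝ)+1)⁻¹ - vv 0 k x


/-- the partial sum identity -/
lemma partial_sum_id {x : ℝ} (hx : 0 < x) (n : ℕ) :
    ∑ k ∈ Finset.range n, uu k x
      = ((harmonic n : ℝ) - Real.log n)
        + (1/x) * (Real.BohrMollerup.logGammaSeq (x+1) n
            + (Real.log (x + n + 1) - Real.log n)) := by
  induction n with
  | zero =>
    simp only [Finset.range_zero, Finset.sum_empty, harmonic_zero, Rat.cast_zero,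
      Nat.cast_zero, Real.log_zero, Real.BohrMollerup.logGammaSeq]
    simp only [zero_add, Finset.range_one, Finset.sum_singleton, Nat.cast_zero, add_zero,
      Nat.factorial_zero, Nat.cast_one, Real.log_one, Real.log_zero]
    ring
  | succ n ih =>
    rw [Finset.sum_range_succ, ih, uu, vv0_eq n hx]
    have hfac : Real.log ((Nat.factorial (n+1) : ℝ)) = Real.log ((n:ℝ)+1) + Real.log ((Nat.factorial n : ℝ)) := by
      rw [Nat.factorial_succ]
      push_cast
      rw [Real.log_mul (by positivity) (by exact_mod_cast Nat.cast_pos.mpr (Nat.factorial_pos n) |>.ne')]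
    have hgseq : Real.BohrMollerup.logGammaSeq (x+1) (n+1)
        = Real.BohrMollerup.logGammaSeq (x+1) n
          + (x+1) * (Real.log ((n:ℝ)+1) - Real.log (n:ℝ))
          + Real.log ((n:ℝ)+1) - Real.log (x + 1 + ((n:ℕ)+1)) := by
      simp only [Real.BohrMollerup.logGammaSeq]
      rw [Finset.sum_range_succ, hfac]
      push_cast
      ring
    have hharm : ((harmonic (n+1) : ℝ)) = (harmonic n : ℝ) + ((n:ℝ)+1)⁻¹ := by
      rw [harmonic_succ]
      push_cast
      ring
    rw [hgseq, hharm]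
    have e1 : ((n+1:ℕ):ℝ) = (n:ℝ)+1 := by push_cast; ring
    rw [e1]
    have e2 : x + ((n:ℝ)+1) + 1 = x + 1 + ((n:ℝ)+1) := by ring
    have e3 : Real.log (x + ((n:ℝ)+1) + 1) = Real.log (x + 1 + ((n:ℝ)+1)) := by rw [e2]
    rw [e3]
    field_simp
    ring

/-- the limit -/
lemma tendsto_partial_sum {x : ℝ} (hx : 0 < x) :
    Tendsto (fun n => ∑ k ∈ Finset.range n, uu k x) atTop (𝓝 (gg x)) := by
  have h1 : Tendsto (fun n : ℕ => (harmonic n : ℝ) - Real.log n) atTop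
      (𝓝 Real.eulerMascheroniConstant) := Real.tendsto_harmonic_sub_log
  have h2 : Tendsto (fun n : ℕ => Real.BohrMollerup.logGammaSeq (x+1) n) atTop
      (𝓝 (Real.log (Real.Gamma (x+1)))) :=
    Real.BohrMollerup.tendsto_log_gamma (by linarith)
  have h3 : Tendsto (fun n : ℕ => Real.log (x + n + 1) - Real.log n) atTop (𝓝 0) := by
    have hq : Tendsto (fun n : ℕ => 1 + (x+1)/n) atTop (𝓝 1) := by
      have := tendsto_const_div_atTop_nhds_zero_nat (x+1)
      simpa using (tendsto_const_nhds (x := (1:ℝ))).add this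
    have hlog : Tendsto (fun n : ℕ => Real.log (1 + (x+1)/n)) atTop (𝓝 0) := by
      have := (Real.continuousAt_log (by norm_num : (1:ℝ) ≠ 0)).tendsto.comp hq
      simpa [Function.comp_def] using this
    apply hlog.congr'
    filter_upwards [eventually_ge_atTop 1] with n hn
    have hn0 : (0:ℝ) < n := by exact_mod_cast hn
    rw [← Real.log_div (by positivity) hn0.ne']
    congr 1
    field_simp
    ring
  have := (h1.add (((h2.add h3).const_mul (1/x))))
  rw [add_zero] at this
  apply Tendsto.congr' _ this
  filter_upwards with n
  rw [partial_sum_id hx n]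

lemma vv_bound2 (j k : ℕ) {x : ℝ} (hx : 0 < x) :
    ‖vv (j+1) k x‖ ≤ (((k:ℝ) + 1) ^ 2)⁻¹ := by
  rw [Real.norm_eq_abs, abs_of_nonneg (vv_nonneg _ _ hx.le)]
  refine (vv_le (j+1) k hx.le).trans ?_
  apply inv_anti₀ (by positivity)
  apply pow_le_pow_right₀ (by linarith [Nat.cast_nonneg (α := ℝ) k])
  omega

lemma tendstoUniformly_SS (j : ℕ) :
    TendstoUniformlyOn (fun n x => ∑ k ∈ Finset.range n, vv (j+1) k x) (SS (j+1))
      atTop (Ioi 0) := by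
  have := tendstoUniformlyOn_tsum_nat (f := fun k x => vv (j+1) k x)
    (u := fun k => (((k:ℝ)+1)^2)⁻¹) summable_aux (s := Ioi 0)
    (fun k x hx => vv_bound2 j k hx)
  exact this

lemma SS_hasDerivAt (j : ℕ) {x : ℝ} (hx : 0 < x) :
    HasDerivAt (SS (j+1)) (-((j:ℝ)+2) * SS (j+2) x) x := by
  have key := hasDerivAt_of_tendstoUniformlyOn (l := atTop) isOpen_Ioi
    (f := fun n x => ∑ k ∈ Finset.range n, vv (j+1) k x)
    (f' := fun n x => ∑ k ∈ Finset.range n, (-((j:ℝ)+2) * vv (j+2) k x))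
    (g := SS (j+1)) (g' := fun x => -((j:ℝ)+2) * SS (j+2) x) ?_ ?_ ?_ (mem_Ioi.mpr hx)
  · exact key
  · -- uniform convergence of derivatives
    have h1 := tendstoUniformlyOn_tsum_nat (f := fun k x => -((j:ℝ)+2) * vv (j+2) k x)
      (u := fun k => (((j:ℝ)+2) * (((k:ℝ)+1)^2)⁻¹)) (summable_aux.mul_left _) (s := Ioi 0)
      (fun k x hx => by
        rw [norm_mul]
        have : ‖-((j:ℝ)+2)‖ = (j:ℝ)+2 := by
          rw [norm_neg, Real.norm_eq_abs, abs_of_nonneg (by positivity)]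
        rw [this]
        exact mul_le_mul_of_nonneg_left (vv_bound2 (j+1) k hx) (by positivity))
    have heq : ∀ x : ℝ, (∑' k, -((j:ℝ)+2) * vv (j+2) k x) = -((j:ℝ)+2) * SS (j+2) x := by
      intro x
      rw [tsum_mul_left]
      rfl
    simpa only [heq] using h1
  · -- derivatives of partial sums
    filter_upwards with n x hx'
    have hx0 : 0 < x := hx'
    have : HasDerivAt (fun y => ∑ k ∈ Finset.range n, vv (j+1) k y)
        (∑ k ∈ Finset.range n, (-((j:ℝ)+2) * vv (j+2) k x)) x := by
      apply HasDerivAt.fun_sum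
      intro k _
      have := vv_hasDerivAt (j+1) k hx0
      have hc : -((↑(j+1):ℝ) + 1) = -((j:ℝ)+2) := by push_cast; ring
      rw [hc] at this
      exact this
    exact this
  · intro x hx'
    exact ((summable_vv j hx').hasSum.tendsto_sum_nat)

lemma gg_hasDerivAt {x : ℝ} (hx : 0 < x) : HasDerivAt gg (SS 1 x) x := by
  have key := hasDerivAt_of_tendstoUniformlyOn (l := atTop) isOpen_Ioi
    (f := fun n x => ∑ k ∈ Finset.range n, uu k x)
    (f' := fun n x => ∑ k ∈ Finset.range n, vv 1 k x)
    (g := gg) (g' := SS 1) ?_ ?_ ?_ (mem_Ioi.mpr hx)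
  · exact key
  · exact tendstoUniformlyOn_tsum_nat (f := fun k x => vv 1 k x)
      (u := fun k => (((k:ℝ)+1)^2)⁻¹) summable_aux
      (fun k x hx => vv_bound2 0 k hx)
  · filter_upwards with n x hx'
    apply HasDerivAt.fun_sum
    intro k _
    have h := vv_hasDerivAt 0 k hx'
    have h2 := (hasDerivAt_const x (((k:ℝ)+1)⁻¹)).sub h
    have : (0 : ℝ) - (-(((0:ℕ):ℝ) + 1) * vv (0+1) k x) = vv 1 k x := by
      norm_num
    rw [this] at h2
    exact h2
  · intro y hy
    exact tendsto_partial_sum hy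

noncomputable def FF (β : ℝ) : ℕ → ℝ → ℝ
  | 0 => fun x => 1 + (1/x) * Real.log (Real.Gamma (x+1)) - Real.log (x+β)
  | (m+1) => fun x => (-1)^m * ((Nat.factorial (m+1) : ℝ)) * SS (m+1) x
      - (-1)^m * ((Nat.factorial m : ℝ)) * ((x+β)^(m+1))⁻¹

variable {β : ℝ}

lemma hasDerivAt_log_add (hβ0 : 0 ≤ β) {x : ℝ} (hx : 0 < x) :
    HasDerivAt (fun x : ℝ => Real.log (x+β)) ((x+β)⁻¹) x := by
  have h1 : HasDerivAt (fun x : ℝ => x + β) 1 x := (hasDerivAt_id x).add_const β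
  have := (Real.hasDerivAt_log (by positivity : x + β ≠ 0)).comp x h1
  simpa [Function.comp_def] using this

lemma hasDerivAt_inv_pow (hβ0 : 0 ≤ β) (m : ℕ) {x : ℝ} (hx : 0 < x) :
    HasDerivAt (fun x : ℝ => ((x+β)^(m+1))⁻¹) (-((m:ℝ)+1) * ((x+β)^(m+2))⁻¹) x := by
  have hpos : 0 < x + β := by positivity
  have h1 : HasDerivAt (fun x : ℝ => (x+β)^(m+1)) (((m:ℝ)+1) * (x+β)^m) x := by
    have := ((hasDerivAt_id x).add_const β).fun_pow (m+1)
    simpa [Nat.add_sub_cancel] using this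
  have h2 := h1.inv (pow_ne_zero _ hpos.ne')
  refine h2.congr_deriv (Eq.symm ?_)
  field_simp
  ring

lemma FF_hasDerivAt (hβ0 : 0 ≤ β) (m : ℕ) {x : ℝ} (hx : 0 < x) :
    HasDerivAt (FF β m) (FF β (m+1) x) x := by
  cases m with
  | zero =>
    have heq : FF β 0 = fun x => (gg x + (1 - Real.eulerMascheroniConstant)) - Real.log (x+β) := by
      funext y
      simp only [FF, gg]
      ring
    rw [heq]
    have h := ((gg_hasDerivAt hx).add_const (1 - Real.eulerMascheroniConstant)).sub
      (hasDerivAt_log_add hβ0 hx)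
    refine h.congr_deriv (Eq.symm ?_)
    simp [FF, Nat.factorial]
  | succ m =>
    have h1 := (SS_hasDerivAt m hx).const_mul ((-1:ℝ)^m * (Nat.factorial (m+1) : ℝ))
    have h2 := (hasDerivAt_inv_pow hβ0 m hx).const_mul ((-1:ℝ)^m * (Nat.factorial m : ℝ))
    have h := h1.sub h2
    refine h.congr_deriv (Eq.symm ?_)
    show FF β (m+2) x = _
    simp only [FF]
    have e1 : (Nat.factorial (m+2) : ℝ) = ((m:ℝ)+2) * (Nat.factorial (m+1) : ℝ) := by
      rw [Nat.factorial_succ]; push_cast; ring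
    have e2 : (Nat.factorial (m+1) : ℝ) = ((m:ℝ)+1) * (Nat.factorial m : ℝ) := by
      rw [Nat.factorial_succ]; push_cast; ring
    rw [e1, e2]
    push_cast
    ring

lemma FF_sign (hβ0 : 0 ≤ β) (hβ1 : β ≤ 1) (m : ℕ) {x : ℝ} (hx : 0 < x) :
    0 ≤ (-1:ℝ)^(m+1) * FF β (m+1) x := by
  have hkey := key_bound m hx
  have hSS : ((m:ℝ)+1) * SS (m+1) x ≤ ((x+β)^(m+1))⁻¹ := by
    refine hkey.trans ?_
    apply inv_anti₀ (by positivity)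
    exact pow_le_pow_left₀ (by positivity) (by linarith) _
  have hsgn : (-1:ℝ)^(m+1) * (-1:ℝ)^m = -1 := by
    rw [← pow_add]
    exact Odd.neg_one_pow ⟨m, by ring⟩
  have hSSnn : 0 ≤ SS (m+1) x := by
    apply tsum_nonneg
    intro k
    exact vv_nonneg _ _ hx.le
  simp only [FF]
  have expand : (-1:ℝ)^(m+1) * ((-1)^m * ((Nat.factorial (m+1) : ℝ)) * SS (m+1) x
      - (-1)^m * ((Nat.factorial m : ℝ)) * ((x+β)^(m+1))⁻¹)
      = (Nat.factorial m : ℝ) * ((x+β)^(m+1))⁻¹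
        - (Nat.factorial (m+1) : ℝ) * SS (m+1) x := by
    have h2 : ((-1:ℝ)^(m+1) * (-1:ℝ)^m) = -1 := hsgn
    calc (-1:ℝ)^(m+1) * ((-1)^m * ((Nat.factorial (m+1) : ℝ)) * SS (m+1) x
        - (-1)^m * ((Nat.factorial m : ℝ)) * ((x+β)^(m+1))⁻¹)
        = ((-1:ℝ)^(m+1) * (-1:ℝ)^m) * (((Nat.factorial (m+1) : ℝ)) * SS (m+1) x
            - ((Nat.factorial m : ℝ)) * ((x+β)^(m+1))⁻¹) := by ring
      _ = _ := by rw [h2]; ring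
  rw [expand]
  have e2 : (Nat.factorial (m+1) : ℝ) = ((m:ℝ)+1) * (Nat.factorial m : ℝ) := by
    rw [Nat.factorial_succ]; push_cast; ring
  rw [e2]
  have hfacnn : (0:ℝ) ≤ (Nat.factorial m : ℝ) := by positivity
  have := mul_le_mul_of_nonneg_left hSS hfacnn
  nlinarith [this]



lemma tendsto_log_div_nat : Tendsto (fun n : ℕ => Real.log n / n) atTop (𝓝 0) := by
  have h := Real.isLittleO_log_id_atTop.tendsto_div_nhds_zero
  exact h.comp tendsto_natCast_atTop_atTop

lemma tendsto_f_nat {β : ℝ} (hβ0 : 0 ≤ β) :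
    Tendsto (fun n : ℕ => 1 + (1/(n:ℝ)) * Real.log (Real.Gamma ((n:ℝ)+1)) - Real.log ((n:ℝ)+β))
      atTop (𝓝 0) := by
  have hπ : (0:ℝ) < Real.sqrt Real.pi := Real.sqrt_pos.mpr Real.pi_pos
  have t1 : Tendsto (fun n : ℕ => (1/(n:ℝ)) * Real.log (Stirling.stirlingSeq n)) atTop (𝓝 0) := by
    have hs : Tendsto (fun n : ℕ => Real.log (Stirling.stirlingSeq n)) atTop
        (𝓝 (Real.log (Real.sqrt Real.pi))) :=
      (Real.continuousAt_log hπ.ne').tendsto.comp Stirling.tendsto_stirlingSeq_sqrt_pi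
    have h0 := tendsto_const_div_atTop_nhds_zero_nat (1:ℝ)
    have := h0.mul hs
    simpa using this
  have t2 : Tendsto (fun n : ℕ => (1/(n:ℝ)) * (1/2 * Real.log (2*n))) atTop (𝓝 0) := by
    have ha : Tendsto (fun n : ℕ => (1/(n:ℝ)) * Real.log 2) atTop (𝓝 0) := by
      have := (tendsto_const_div_atTop_nhds_zero_nat (1:ℝ)).mul_const (Real.log 2)
      simpa using this
    have hb := tendsto_log_div_nat
    have hc : Tendsto (fun n : ℕ => (1/(n:ℝ)) * Real.log 2 + Real.log n / n) atTop (𝓝 0) := by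
      simpa using ha.add hb
    have := hc.const_mul (1/2 : ℝ)
    rw [mul_zero] at this
    apply this.congr'
    filter_upwards [eventually_ge_atTop 1] with n hn
    have hn0 : (0:ℝ) < n := by exact_mod_cast hn
    rw [Real.log_mul (two_ne_zero) hn0.ne']
    ring
  have t3 : Tendsto (fun n : ℕ => Real.log ((n:ℝ)+β) - Real.log n) atTop (𝓝 0) := by
    have hq : Tendsto (fun n : ℕ => 1 + β/n) atTop (𝓝 1) := by
      have := tendsto_const_div_atTop_nhds_zero_nat β
      simpa using (tendsto_const_nhds (x := (1:ℝ))).add this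
    have hlog : Tendsto (fun n : ℕ => Real.log (1 + β/n)) atTop (𝓝 0) := by
      have := (Real.continuousAt_log (by norm_num : (1:ℝ) ≠ 0)).tendsto.comp hq
      simpa [Function.comp_def] using this
    apply hlog.congr'
    filter_upwards [eventually_ge_atTop 1] with n hn
    have hn0 : (0:ℝ) < n := by exact_mod_cast hn
    rw [← Real.log_div (by positivity) hn0.ne']
    congr 1
    field_simp
  have total : Tendsto (fun n : ℕ =>
      (1/(n:ℝ)) * Real.log (Stirling.stirlingSeq n) + (1/(n:ℝ)) * (1/2 * Real.log (2*n))
        - (Real.log ((n:ℝ)+β) - Real.log n)) atTop (𝓝 0) := by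
    have := (t1.add t2).sub t3
    simpa using this
  apply total.congr'
  filter_upwards [eventually_ge_atTop 1] with n hn
  have hn0 : (0:ℝ) < n := by exact_mod_cast hn
  have hfac : Real.log (Real.Gamma ((n:ℝ)+1)) = Real.log ((Nat.factorial n : ℝ)) := by
    rw [Real.Gamma_nat_eq_factorial]
  have hstir := Stirling.log_stirlingSeq_formula n
  have hlogdiv : Real.log ((n:ℝ) / Real.exp 1) = Real.log n - 1 := by
    rw [Real.log_div hn0.ne' (Real.exp_ne_zero 1), Real.log_exp]
  have hlogfac : Real.log ((Nat.factorial n : ℝ))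
      = Real.log (Stirling.stirlingSeq n) + 1/2 * Real.log (2*n) + (n:ℝ) * (Real.log n - 1) := by
    rw [← hlogdiv]
    linarith [hstir]
  rw [hfac, hlogfac]
  field_simp
  ring

lemma FF_iter (hβ0 : 0 ≤ β) (n : ℕ) :
    EqOn (iteratedDerivWithin n
      (fun x => 1 + (1 / x) * Real.log (Real.Gamma (x + 1)) - Real.log (x + β)) (Ioi 0))
      (FF β n) (Ioi 0) := by
  induction n with
  | zero =>
    intro x hx
    rw [iteratedDerivWithin_zero]
    rfl
  | succ n ih =>
    intro x hx
    rw [iteratedDerivWithin_succ]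
    rw [derivWithin_congr ih (ih hx)]
    rw [derivWithin_of_isOpen isOpen_Ioi hx]
    exact (FF_hasDerivAt hβ0 n (mem_Ioi.mp hx)).deriv

lemma FF0_antitone (hβ0 : 0 ≤ β) (hβ1 : β ≤ 1) : AntitoneOn (FF β 0) (Ioi 0) := by
  have hint : interior (Ioi (0:ℝ)) = Ioi 0 := isOpen_Ioi.interior_eq
  apply antitoneOn_of_deriv_nonpos (convex_Ioi 0)
  · intro x hx
    exact (FF_hasDerivAt hβ0 0 (mem_Ioi.mp hx)).continuousAt.continuousWithinAt
  · rw [hint]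
    intro x hx
    exact (FF_hasDerivAt hβ0 0 (mem_Ioi.mp hx)).differentiableAt.differentiableWithinAt
  · rw [hint]
    intro x hx
    rw [(FF_hasDerivAt hβ0 0 (mem_Ioi.mp hx)).deriv]
    have := FF_sign hβ0 hβ1 0 (mem_Ioi.mp hx)
    norm_num at this
    linarith

lemma FF0_nonneg (hβ0 : 0 ≤ β) (hβ1 : β ≤ 1) {x : ℝ} (hx : 0 < x) : 0 ≤ FF β 0 x := by
  have hlim : Tendsto (fun n : ℕ => FF β 0 n) atTop (𝓝 0) := by
    apply (tendsto_f_nat hβ0).congr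
    intro n
    rfl
  apply le_of_tendsto hlim
  filter_upwards [eventually_ge_atTop (⌈x⌉₊ + 1)] with n hn
  have hxn : x ≤ (n:ℝ) := by
    calc x ≤ (⌈x⌉₊ : ℝ) := Nat.le_ceil x
      _ ≤ (n:ℝ) := by exact_mod_cast Nat.le_of_succ_le hn
  have hn0 : (0:ℝ) < n := lt_of_lt_of_le hx hxn
  exact FF0_antitone hβ0 hβ1 hx (mem_Ioi.mpr hn0) hxn

theorem main (hβ0 : 0 ≤ β) (hβ1 : β ≤ 1) :
    ContDiffOn ℝ (⊤ : ℕ∞) (fun x => 1 + (1 / x) * Real.log (Real.Gamma (x + 1))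
      - Real.log (x + β)) (Ioi 0) ∧
    ∀ (n : ℕ), ∀ x ∈ Ioi (0:ℝ), 0 ≤ (-1 : ℝ) ^ n * iteratedDerivWithin n
      (fun x => 1 + (1 / x) * Real.log (Real.Gamma (x + 1)) - Real.log (x + β)) (Ioi 0) x := by
  constructor
  · apply contDiffOn_of_differentiableOn_deriv
    intro m _
    intro x hx
    apply DifferentiableWithinAt.congr
      ((FF_hasDerivAt hβ0 m (mem_Ioi.mp hx)).differentiableAt.differentiableWithinAt)
      (fun y hy => FF_iter hβ0 m hy) (FF_iter hβ0 m hx)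
  · intro n x hx
    rw [FF_iter hβ0 n hx]
    cases n with
    | zero => simpa using FF0_nonneg hβ0 hβ1 (mem_Ioi.mp hx)
    | succ m => exact FF_sign hβ0 hβ1 m (mem_Ioi.mp hx)

end CMproof

open Set Real

theorem one_add_log_gamma_div_x_sub_log_completely_monotone (β : ℝ)
    (hβ0 : 0 ≤ β) (hβ1 : β ≤ 1) :
    CompletelyMonotoneOn
      (fun x => 1 + (1 / x) * Real.log (Real.Gamma (x + 1)) - Real.log (x + β))
      (Set.Ioi 0) := by
  exact ⟨(CMproof.main hβ0 hβ1).1, (CMproof.main hβ0 hβ1).2⟩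
end
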